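/- arXiv:1207.0983 — 7 statements merged into one kernel-verified Lean document; each statement's English description precedes it below -/
import Mathlib

section
/- Let D ⊆ E, let I ⊆ V be a finite connected set of vertices, and let x ∈ I be a vertex having exactly one neighbor inside I (i.e., exactly one of the k+1 neighbors of x belongs to I). Then H(σ_I) - H(σ_{I∖{x}}) ≥ 2J[(k+1) - 2(d_D + 1)]. -/
open Classical

/-- `G` is a Cayley tree with branching number `k`: an infinite connected acyclic
simple graph in which every vertex has exactly `k + 1` neighbors. -/
structure IsCayleyTree {V : Type*} (G : SimpleGraph V) (k : ℕ) : Prop where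
  infinite : Infinite V
  connected : G.Connected
  acyclic : G.IsAcyclic
  degree : ∀ v : V, (G.neighborSet v).ncard = k + 1

/-- A spin configuration takes values in `{-1, +1}`. -/
def IsSpin {V : Type*} (σ : V → ℤ) : Prop := ∀ v, σ v = 1 ∨ σ v = -1

/-- `σ` is frustrated exactly on the edges of `D`: for every edge `{x,y}` of `G`,
`σ x * σ y = -1` if `{x,y} ∈ D` and `σ x * σ y = 1` otherwise. -/
def SatisfiesD {V : Type*} (G : SimpleGraph V) (D : Set (Sym2 V)) (σ : V → ℤ) : Prop :=
  ∀ x y : V, G.Adj x y →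
    (s(x, y) ∈ D → σ x * σ y = -1) ∧ (s(x, y) ∉ D → σ x * σ y = 1)

/-- The excess energy `H(σ) - H(σbase) = J * Σ_{{x,y} ∈ E} (σbase x * σbase y - σ x * σ y)`,
a sum with finitely many nonzero terms when `σ` and `σbase` differ at finitely many sites. -/
noncomputable def excessEnergy {V : Type*} (G : SimpleGraph V) (J : ℝ) (σ σbase : V → ℤ) : ℝ :=
  J * ∑ᶠ e ∈ G.edgeSet,
      ((Sym2.lift ⟨fun x y => σbase x * σbase y - σ x * σ y, fun _ _ => by ring⟩ e : ℤ) : ℝ)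

/-- The configuration obtained from `σ` by flipping all spins in `C`. -/
noncomputable def flipSpins {V : Type*} (σ : V → ℤ) (C : Set V) : V → ℤ :=
  fun v => if v ∈ C then -σ v else σ v

/-- The number `d_D(v)` of edges of `D` incident to the vertex `v`. -/
noncomputable def incidentCount {V : Type*} (D : Set (Sym2 V)) (v : V) : ℕ :=
  {e ∈ D | v ∈ e}.ncard

/-- A set of vertices is connected if any two of its vertices are joined by a
walk staying within the set. -/
def SetConnected {V : Type*} (G : SimpleGraph V) (S : Set V) : Prop :=
  ∀ x ∈ S, ∀ y ∈ S, ∃ p : G.Walk x y, ∀ z ∈ p.support, z ∈ S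

/-- If `I` is a finite connected set and `x ∈ I` has exactly one neighbor
inside `I`, then `H(σ_I) - H(σ_{I∖{x}}) ≥ 2J[(k+1) - 2(d_D + 1)]`. -/
theorem energy_step_estimate {V : Type*} (G : SimpleGraph V) (k : ℕ) (hk : 2 ≤ k)
    (hG : IsCayleyTree G k) (root : V) (J : ℝ) (hJ : 0 < J)
    (D : Set (Sym2 V)) (hD : D ⊆ G.edgeSet)
    (dD : ℕ) (hbdd : BddAbove (Set.range fun v => incidentCount D v))
    (hdD : dD = ⨆ v, incidentCount D v)
    (σ : V → ℤ) (hσ : IsSpin σ) (hσroot : σ root = 1) (hσD : SatisfiesD G D σ)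
    (I : Set V) (hIfin : I.Finite) (hIconn : SetConnected G I)
    (x : V) (hx : x ∈ I) (hxnb : ({y ∈ I | G.Adj x y}).ncard = 1) :
    excessEnergy G J (flipSpins σ I) σ - excessEnergy G J (flipSpins σ (I \ {x})) σ
      ≥ 2 * J * (((k : ℝ) + 1) - 2 * ((dD : ℝ) + 1)) := by
  classical
  have hnbfin : ∀ v : V, (G.neighborSet v).Finite := by
    intro v
    by_contra h
    have h0 : (G.neighborSet v).ncard = 0 := Set.Infinite.ncard h
    rw [hG.degree v] at h0
    omega
  set f1 : Sym2 V → ℝ := fun e =>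
    ((Sym2.lift ⟨fun a b => σ a * σ b - flipSpins σ I a * flipSpins σ I b,
        fun _ _ => by ring⟩ e : ℤ) : ℝ) with hf1
  set f2 : Sym2 V → ℝ := fun e =>
    ((Sym2.lift ⟨fun a b => σ a * σ b - flipSpins σ (I \ {x}) a * flipSpins σ (I \ {x}) b,
        fun _ _ => by ring⟩ e : ℤ) : ℝ) with hf2
  have hEfin : {e ∈ G.edgeSet | ∃ v ∈ I, v ∈ e}.Finite := by
    apply Set.Finite.subset (hIfin.biUnion (fun v _ => ((hnbfin v).image (fun y => s(v, y)))))
    rintro e ⟨he, v, hvI, hve⟩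
    obtain ⟨w, rfl⟩ := Sym2.mem_iff_exists.mp hve
    exact Set.mem_biUnion hvI ⟨w, (G.mem_edgeSet).mp he, rfl⟩
  set t : Finset (Sym2 V) := hEfin.toFinset with ht
  have hsupp1 : G.edgeSet ∩ Function.support f1 = ↑t ∩ Function.support f1 := by
    ext e
    induction e using Sym2.ind with
    | _ a b =>
      simp only [Set.mem_inter_iff, Function.mem_support, ht, Set.Finite.coe_toFinset,
        Set.mem_setOf_eq]
      constructor
      · rintro ⟨he, hne⟩
        refine ⟨⟨he, ?_⟩, hne⟩
        by_contra hcon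
        push_neg at hcon
        apply hne
        have ha : a ∉ I := fun h => (hcon a h) (by simp)
        have hb : b ∉ I := fun h => (hcon b h) (by simp)
        simp [hf1, flipSpins, ha, hb]
      · rintro ⟨⟨he, _⟩, hne⟩
        exact ⟨he, hne⟩
  have hsupp2 : G.edgeSet ∩ Function.support f2 = ↑t ∩ Function.support f2 := by
    ext e
    induction e using Sym2.ind with
    | _ a b =>
      simp only [Set.mem_inter_iff, Function.mem_support, ht, Set.Finite.coe_toFinset,
        Set.mem_setOf_eq]
      constructor
      · rintro ⟨he, hne⟩
        refine ⟨⟨he, ?_⟩, hne⟩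
        by_contra hcon
        push_neg at hcon
        apply hne
        have ha : a ∉ I \ {x} := fun h => (hcon a h.1) (by simp)
        have hb : b ∉ I \ {x} := fun h => (hcon b h.1) (by simp)
        simp only [Set.mem_diff, Set.mem_singleton_iff] at ha hb
        simp [hf2, flipSpins, ha, hb]
      · rintro ⟨⟨he, _⟩, hne⟩
        exact ⟨he, hne⟩
  have e1 : excessEnergy G J (flipSpins σ I) σ = J * ∑ e ∈ t, f1 e := by
    have : excessEnergy G J (flipSpins σ I) σ = J * ∑ᶠ e ∈ G.edgeSet, f1 e := rfl
    rw [this, finsum_mem_eq_sum_of_inter_support_eq f1 hsupp1]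
  have e2 : excessEnergy G J (flipSpins σ (I \ {x})) σ = J * ∑ e ∈ t, f2 e := by
    have : excessEnergy G J (flipSpins σ (I \ {x})) σ = J * ∑ᶠ e ∈ G.edgeSet, f2 e := rfl
    rw [this, finsum_mem_eq_sum_of_inter_support_eq f2 hsupp2]
  set g : Sym2 V → ℝ := fun e => f1 e - f2 e with hg
  set A : Finset V := (hnbfin x).toFinset with hA
  have hAmem : ∀ y, y ∈ A ↔ G.Adj x y := by
    intro y; simp [hA, Set.Finite.mem_toFinset]
  have hAcard : A.card = k + 1 := by
    rw [hA, ← Set.ncard_eq_toFinset_card _ (hnbfin x), hG.degree x]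
  set N : Finset (Sym2 V) := A.image (fun y => s(x, y)) with hN
  have hNsub : N ⊆ t := by
    intro e he
    rw [hN, Finset.mem_image] at he
    obtain ⟨y, hy, rfl⟩ := he
    have hadj : G.Adj x y := (hAmem y).mp hy
    rw [ht, Set.Finite.mem_toFinset]
    exact ⟨(G.mem_edgeSet).mpr hadj, x, hx, by simp⟩
  have hzero : ∀ e ∈ t, e ∉ N → g e = 0 := by
    intro e
    induction e using Sym2.ind with
    | _ a b =>
      intro het heN
      have he : s(a, b) ∈ G.edgeSet := by
        rw [ht, Set.Finite.mem_toFinset] at het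
        exact het.1
      have hadj : G.Adj a b := (G.mem_edgeSet).mp he
      have ha : a ≠ x := by
        rintro rfl
        exact heN (by
          rw [hN, Finset.mem_image]
          exact ⟨b, (hAmem b).mpr hadj, rfl⟩)
      have hb : b ≠ x := by
        rintro rfl
        exact heN (by
          rw [hN, Finset.mem_image]
          exact ⟨a, (hAmem a).mpr hadj.symm, Sym2.eq_swap⟩)
      have ha' : a ∈ I \ {x} ↔ a ∈ I := by simp [ha]
      have hb' : b ∈ I \ {x} ↔ b ∈ I := by simp [hb]
      by_cases haI : a ∈ I <;> by_cases hbI : b ∈ I <;>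
        simp [hg, hf1, hf2, flipSpins, Set.mem_diff, Set.mem_singleton_iff,
          haI, hbI, ha, hb] <;> ring_nf
  have hsum : ∑ e ∈ t, g e = ∑ y ∈ A, g s(x, y) := by
    rw [← Finset.sum_subset hNsub hzero, hN,
      Finset.sum_image (fun y _ z _ h => Sym2.congr_right.mp h)]
  have hpt : ∀ y ∈ A, (if y ∈ I ∨ s(x, y) ∈ D then (-2 : ℝ) else 2) ≤ g s(x, y) := by
    intro y hy
    have hadj : G.Adj x y := (hAmem y).mp hy
    have hyx : y ≠ x := fun h => G.irrefl (h ▸ hadj)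
    have hyd : y ∈ I \ {x} ↔ y ∈ I := by simp [hyx]
    have hxd : x ∉ I \ {x} := by simp
    have hg' : g s(x, y) = ((2 * (if y ∈ I then -1 else 1) * (σ x * σ y) : ℤ) : ℝ) := by
      by_cases hyI : y ∈ I
      · simp only [hg, hf1, hf2, Sym2.lift_mk, flipSpins, if_pos hx, if_pos hyI,
          if_pos (hyd.mpr hyI), if_neg hxd, if_pos hyI]
        push_cast; ring
      · simp only [hg, hf1, hf2, Sym2.lift_mk, flipSpins, if_pos hx, if_neg hyI,
          if_neg (fun h => hyI (hyd.mp h)), if_neg hxd]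
        push_cast; ring
    by_cases hyD : s(x, y) ∈ D
    · have hσxy : σ x * σ y = -1 := (hσD x y hadj).1 hyD
      rw [hg', hσxy]
      by_cases hyI : y ∈ I <;> simp [hyI, hyD] <;> norm_num
    · have hσxy : σ x * σ y = 1 := (hσD x y hadj).2 hyD
      rw [hg', hσxy]
      by_cases hyI : y ∈ I <;> simp [hyI, hyD] <;> norm_num
  set B : Finset V := A.filter (fun y => y ∈ I ∨ s(x, y) ∈ D) with hB
  have hite : ∑ y ∈ A, (if y ∈ I ∨ s(x, y) ∈ D then (-2 : ℝ) else 2)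
      = 2 * A.card - 4 * B.card := by
    rw [Finset.sum_ite, Finset.sum_const, Finset.sum_const, nsmul_eq_mul, nsmul_eq_mul]
    have hcd : (B.card : ℝ)
        + ((A.filter (fun y => ¬(y ∈ I ∨ s(x, y) ∈ D))).card : ℝ) = A.card := by
      rw [hB]
      exact_mod_cast Finset.card_filter_add_card_filter_not
        (s := A) (fun y => y ∈ I ∨ s(x, y) ∈ D)
    rw [hB]
    linarith
  have hB1 : (A.filter (fun y => y ∈ I)).card = 1 := by
    have hset : ((A.filter (fun y => y ∈ I)) : Set V) = {y ∈ I | G.Adj x y} := by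
      ext y
      simp only [Finset.coe_filter, Set.mem_setOf_eq, Finset.mem_coe, hAmem y]
      tauto
    rw [← Set.ncard_coe_finset, hset, hxnb]
  have hB2 : (A.filter (fun y => s(x, y) ∈ D)).card ≤ dD := by
    have hDx : {e ∈ D | x ∈ e}.Finite := by
      apply Set.Finite.subset ((hnbfin x).image (fun y => s(x, y)))
      rintro e ⟨heD, hxe⟩
      obtain ⟨w, rfl⟩ := Sym2.mem_iff_exists.mp hxe
      exact ⟨w, (G.mem_edgeSet).mp (hD heD), rfl⟩
    have hcard : (A.filter (fun y => s(x, y) ∈ D)).card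
        = ((A.filter (fun y => s(x, y) ∈ D)).image (fun y => s(x, y))).card :=
      (Finset.card_image_of_injOn (fun y _ z _ h => Sym2.congr_right.mp h)).symm
    have himg : (((A.filter (fun y => s(x, y) ∈ D)).image (fun y => s(x, y)) : Finset (Sym2 V))
        : Set (Sym2 V)) ⊆ {e ∈ D | x ∈ e} := by
      intro e he
      simp only [Finset.coe_image, Set.mem_image, Finset.mem_coe, Finset.mem_filter] at he
      obtain ⟨y, ⟨-, hyD⟩, rfl⟩ := he
      exact ⟨hyD, by simp⟩
    calc (A.filter (fun y => s(x, y) ∈ D)).card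
        = (((A.filter (fun y => s(x, y) ∈ D)).image (fun y => s(x, y)) : Finset (Sym2 V))
            : Set (Sym2 V)).ncard := by rw [Set.ncard_coe_finset, hcard]
      _ ≤ {e ∈ D | x ∈ e}.ncard := Set.ncard_le_ncard himg hDx
      _ = incidentCount D x := rfl
      _ ≤ dD := by rw [hdD]; exact le_ciSup hbdd x
  have hBle : B.card ≤ 1 + dD := by
    have : B ⊆ A.filter (fun y => y ∈ I) ∪ A.filter (fun y => s(x, y) ∈ D) := by
      rw [hB, Finset.filter_or]
    calc B.card ≤ (A.filter (fun y => y ∈ I) ∪ A.filter (fun y => s(x, y) ∈ D)).card :=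
          Finset.card_le_card this
      _ ≤ (A.filter (fun y => y ∈ I)).card + (A.filter (fun y => s(x, y) ∈ D)).card :=
          Finset.card_union_le _ _
      _ ≤ 1 + dD := by rw [hB1]; omega
  have hsumge : (2 * ((k : ℝ) + 1) - 4 * (1 + (dD : ℝ))) ≤ ∑ y ∈ A, g s(x, y) := by
    have h1 : (2 * ((k : ℝ) + 1) - 4 * (1 + (dD : ℝ))) ≤ 2 * A.card - 4 * B.card := by
      have hB' : (B.card : ℝ) ≤ 1 + dD := by exact_mod_cast hBle
      rw [hAcard]
      push_cast
      linarith
    calc (2 * ((k : ℝ) + 1) - 4 * (1 + (dD : ℝ))) ≤ 2 * A.card - 4 * B.card := h1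
      _ = ∑ y ∈ A, (if y ∈ I ∨ s(x, y) ∈ D then (-2 : ℝ) else 2) := hite.symm
      _ ≤ ∑ y ∈ A, g s(x, y) := Finset.sum_le_sum hpt
  rw [e1, e2, ← mul_sub, ← Finset.sum_sub_distrib]
  have hgt : ∑ e ∈ t, (f1 e - f2 e) = ∑ y ∈ A, g s(x, y) := hsum
  rw [hgt]
  calc 2 * J * (((k : ℝ) + 1) - 2 * ((dD : ℝ) + 1))
      = J * (2 * ((k : ℝ) + 1) - 4 * (1 + (dD : ℝ))) := by ring
    _ ≤ J * ∑ y ∈ A, g s(x, y) := mul_le_mul_of_nonneg_left hsumge hJ.le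
end

section
/- (Energy estimate) Let D ⊆ E with d_D finite. For every finite nonempty connected set I ⊆ V, the excess energy of the configuration σ_I obtained from σ^{D+} by flipping all spins on I satisfies H(σ_I) - H(σ^{D+}) ≥ 2J[(k+1) - 2(d_D + 1)] · |I|. -/
/-!
Flipping the spins on `I` only changes the edges between `I` and its complement, and an edge
`{v, w}` with `v ∈ I` contributes `2J σ(v)σ(w)`, i.e. `2J` off `D` and `-2J` on `D`. At most
`d_D` such edges per vertex of `I` lie in `D`. Since `I` spans a subtree with `|I| - 1` edges and
every vertex has degree `k + 1`, there are `(k + 1)|I| - 2(|I| - 1)` boundary edges.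
-/

open Classical

open Finset SimpleGraph

theorem SetConnected.induce_connected {V : Type*} {G : SimpleGraph V} {S : Set V}
    (hS : SetConnected G S) (hne : S.Nonempty) : (G.induce S).Connected := by
  obtain ⟨u, hu⟩ := hne
  refine induce_connected_of_patches u hu fun {v} hv => ?_
  obtain ⟨p, hp⟩ := hS u hu v hv
  exact ⟨_, hp, p.start_mem_support, p.end_mem_support,
    p.connected_induce_support.preconnected _ _⟩

noncomputable abbrev IsCayleyTree.locallyFinite {V : Type*} {G : SimpleGraph V} {k : ℕ}
    (hG : IsCayleyTree G k) : G.LocallyFinite := fun v =>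
  (Set.finite_of_ncard_pos (hG.degree v ▸ k.succ_pos)).fintype

theorem injOn_sym2_mk_sigma_filter_notMem {V : Type*} (I : Finset V) (t : V → Finset V) :
    Set.InjOn (fun p : Σ _ : V, V => s(p.1, p.2)) (I.sigma fun v => {w ∈ t v | w ∉ I}) := by
  rintro ⟨x, y⟩ hxy ⟨x', y'⟩ hxy' h
  simp only [coe_sigma, Set.mem_sigma_iff, mem_coe, mem_filter] at hxy hxy'
  rcases Sym2.eq_iff.mp h with ⟨rfl, rfl⟩ | ⟨rfl, rfl⟩
  · rfl
  · exact absurd hxy.1 hxy'.2.2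

theorem mul_sub_flipSpins_mul {V : Type*} (σ : V → ℤ) (C : Set V) (x y : V) :
    σ x * σ y - flipSpins σ C x * flipSpins σ C y =
      if (x ∈ C ↔ y ∈ C) then 0 else 2 * σ x * σ y := by
  by_cases hx : x ∈ C <;> by_cases hy : y ∈ C <;> simp [flipSpins, hx, hy] <;> ring

theorem IsCayleyTree.isRegularOfDegree {V : Type*} {G : SimpleGraph V} [G.LocallyFinite] {k : ℕ}
    (hG : IsCayleyTree G k) : G.IsRegularOfDegree (k + 1) := fun v => by
  rw [← card_neighborSet_eq_degree, ← Nat.card_eq_fintype_card, Nat.card_coe_set_eq, hG.degree v]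

namespace SimpleGraph

variable {V : Type*} {G : SimpleGraph V} [G.LocallyFinite]

theorem degree_induce_coe (I : Finset V) (v : (I : Set V)) :
    (G.induce I).degree v = #{w ∈ G.neighborFinset v | w ∈ I} := by
  rw [← card_neighborFinset_eq_degree, ← card_map (Function.Embedding.subtype _)]
  congr 1
  ext w
  simp

theorem sum_card_neighborFinset_filter_mem_add_two (hG : G.IsAcyclic) {I : Finset V}
    (hI : (G.induce I).Connected) :
    ∑ v ∈ I, #{w ∈ G.neighborFinset v | w ∈ I} + 2 = 2 * #I := by
  have htree : (G.induce I).IsTree := ⟨hI, hG.induce I⟩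
  have hcard := htree.card_edgeFinset
  rw [← sum_coe_sort I]
  simp_rw [← degree_induce_coe]
  rw [sum_degrees_eq_twice_card_edges]
  simp only [Finset.coe_sort_coe, Fintype.card_coe] at hcard
  omega

theorem excessEnergy_flipSpins (J : ℝ) (σ : V → ℤ) (I : Finset V) :
    excessEnergy G J (flipSpins σ I) σ =
      2 * J * ∑ v ∈ I, ∑ w ∈ G.neighborFinset v with w ∉ I, (σ v * σ w : ℤ) := by
  -- each boundary edge is counted once, from its endpoint in `I`
  set B := I.sigma fun v => {w ∈ G.neighborFinset v | w ∉ I}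
  set f : Sym2 V → ℝ := fun e =>
    ((Sym2.lift ⟨fun x y => σ x * σ y - flipSpins σ I x * flipSpins σ I y,
      fun _ _ => by ring⟩ e : ℤ) : ℝ)
  have hf (x y : V) : f s(x, y) = if (x ∈ I ↔ y ∈ I) then 0 else 2 * σ x * σ y := by
    simp only [f, Sym2.lift_mk, mul_sub_flipSpins_mul, mem_coe]
  have hsupp : G.edgeSet ∩ Function.support f =
      ↑(B.image fun p => s(p.1, p.2)) ∩ Function.support f := by
    ext e
    induction e using Sym2.ind with | _ x y => ?_
    simp only [Set.mem_inter_iff, Function.mem_support, coe_image, Set.mem_image, mem_coe,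
      B, mem_sigma, mem_filter, mem_neighborFinset, mem_edgeSet, hf, ne_eq]
    constructor
    · rintro ⟨hxy, hne⟩
      have hcut : ¬(x ∈ I ↔ y ∈ I) := fun h => hne (by simp [h])
      refine ⟨?_, hne⟩
      by_cases hx : x ∈ I
      · exact ⟨⟨x, y⟩, ⟨hx, hxy, by tauto⟩, rfl⟩
      · exact ⟨⟨y, x⟩, ⟨by tauto, hxy.symm, hx⟩, Sym2.eq_swap⟩
    · rintro ⟨⟨⟨v, w⟩, ⟨-, hvw, -⟩, heq⟩, hne⟩
      refine ⟨?_, hne⟩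
      rw [← G.mem_edgeSet, ← heq]
      exact hvw
  rw [excessEnergy, finsum_mem_eq_sum_of_inter_support_eq f hsupp,
    sum_image (injOn_sym2_mk_sigma_filter_notMem I _), sum_sigma, mul_comm 2 J, mul_assoc]
  congr 1
  push_cast
  rw [mul_sum]
  refine sum_congr rfl fun v hv => ?_
  rw [mul_sum]
  refine sum_congr rfl fun w hw => ?_
  simp [hf, hv, (mem_filter.mp hw).2, mul_assoc]

theorem card_filter_mem_le_incidentCount {D : Set (Sym2 V)} (hD : D ⊆ G.edgeSet) (v : V)
    (S : Finset V) : #{w ∈ S | s(v, w) ∈ D} ≤ incidentCount D v := by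
  rw [incidentCount, ← card_image_of_injective _ fun _ _ => Sym2.congr_right.mp,
    ← Set.ncard_coe_finset]
  refine Set.ncard_le_ncard ?_ ((G.incidenceSet v).toFinite.subset fun e he => ⟨hD he.1, he.2⟩)
  intro e he
  simp only [coe_image, coe_filter, Set.mem_image, Set.mem_ofPred_eq] at he
  obtain ⟨w, ⟨-, hw⟩, rfl⟩ := he
  exact ⟨hw, Sym2.mem_mk_left v w⟩

theorem card_sub_two_mul_incidentCount_le_sum {D : Set (Sym2 V)} (hD : D ⊆ G.edgeSet)
    {σ : V → ℤ} (hσ : SatisfiesD G D σ) (v : V) {S : Finset V} (hS : ∀ w ∈ S, G.Adj v w) :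
    (#S : ℤ) - 2 * incidentCount D v ≤ ∑ w ∈ S, σ v * σ w := by
  have hterm : ∀ w ∈ S, σ v * σ w = 1 - 2 * if s(v, w) ∈ D then 1 else 0 := fun w hw => by
    by_cases hvw : s(v, w) ∈ D
    · simp [hvw, (hσ v w (hS w hw)).1 hvw]
    · simp [hvw, (hσ v w (hS w hw)).2 hvw]
  rw [sum_congr rfl hterm, sum_sub_distrib, ← mul_sum, sum_boole]
  have := card_filter_mem_le_incidentCount hD v S
  simp only [sum_const, nsmul_eq_mul, mul_one]
  omega

theorem sum_card_neighborFinset_filter_notMem_add (hG : G.IsAcyclic) {d : ℕ}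
    (hreg : G.IsRegularOfDegree d) {I : Finset V} (hI : (G.induce I).Connected) :
    ∑ v ∈ I, #{w ∈ G.neighborFinset v | w ∉ I} + 2 * #I = d * #I + 2 := by
  have hsplit : ∑ v ∈ I, (#{w ∈ G.neighborFinset v | w ∈ I} + #{w ∈ G.neighborFinset v | w ∉ I})
      = d * #I := by
    simp_rw [card_filter_add_card_filter_not, card_neighborFinset_eq_degree,
      hreg.degree_eq, sum_const, smul_eq_mul, mul_comm]
  rw [sum_add_distrib] at hsplit
  have := sum_card_neighborFinset_filter_mem_add_two hG hI
  omega

end SimpleGraph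

open SimpleGraph in
theorem energy_estimate_connected_general {V : Type*} (G : SimpleGraph V) (k : ℕ)
    (hG : IsCayleyTree G k) (J : ℝ) (hJ : 0 < J)
    (D : Set (Sym2 V)) (hD : D ⊆ G.edgeSet)
    (dD : ℕ) (hbdd : BddAbove (Set.range fun v => incidentCount D v))
    (hdD : dD = ⨆ v, incidentCount D v)
    (σ : V → ℤ) (hσD : SatisfiesD G D σ)
    (I : Set V) (hIfin : I.Finite) (hIne : I.Nonempty) (hIconn : SetConnected G I) :
    excessEnergy G J (flipSpins σ I) σ
      ≥ 2 * J * (((k : ℝ) + 1) - 2 * ((dD : ℝ) + 1)) * (I.ncard : ℝ) := by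
  let := hG.locallyFinite
  obtain ⟨I, rfl⟩ := hIfin.exists_finset_coe
  have hlocal (v : V) : (#{w ∈ G.neighborFinset v | w ∉ I} : ℤ) - 2 * dD ≤
      ∑ w ∈ G.neighborFinset v with w ∉ I, σ v * σ w := by
    have hle : (incidentCount D v : ℤ) ≤ dD := by exact_mod_cast hdD ▸ le_ciSup hbdd v
    have := card_sub_two_mul_incidentCount_le_sum hD hσD v (S := {w ∈ G.neighborFinset v | w ∉ I})
      fun w hw => (G.mem_neighborFinset v w).mp (mem_filter.mp hw).1
    omega
  have hcount := sum_card_neighborFinset_filter_notMem_add hG.acyclic hG.isRegularOfDegree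
    (hIconn.induce_connected hIne)
  have hsum := sum_le_sum fun v (_ : v ∈ I) => hlocal v
  rw [sum_sub_distrib, sum_const, nsmul_eq_mul] at hsum
  have hZ : (((k : ℤ) + 1) - 2 * (dD + 1)) * #I ≤
      ∑ v ∈ I, ∑ w ∈ G.neighborFinset v with w ∉ I, σ v * σ w := by
    have : (∑ v ∈ I, #{w ∈ G.neighborFinset v | w ∉ I} : ℤ) + 2 * #I = (k + 1) * #I + 2 := by
      exact_mod_cast hcount
    linarith
  rw [excessEnergy_flipSpins, Set.ncard_coe_finset, ge_iff_le, mul_assoc]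
  exact mul_le_mul_of_nonneg_left (by exact_mod_cast hZ) (by positivity)

/-- Energy estimate: For every finite nonempty connected set `I`,
`H(σ_I) - H(σ^{D+}) ≥ 2J[(k+1) - 2(d_D + 1)]·|I|`. -/
theorem energy_estimate_connected {V : Type*} (G : SimpleGraph V) (k : ℕ) (hk : 2 ≤ k)
    (hG : IsCayleyTree G k) (root : V) (J : ℝ) (hJ : 0 < J)
    (D : Set (Sym2 V)) (hD : D ⊆ G.edgeSet)
    (dD : ℕ) (hbdd : BddAbove (Set.range fun v => incidentCount D v))
    (hdD : dD = ⨆ v, incidentCount D v)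
    (σ : V → ℤ) (hσ : IsSpin σ) (hσroot : σ root = 1) (hσD : SatisfiesD G D σ)
    (I : Set V) (hIfin : I.Finite) (hIne : I.Nonempty) (hIconn : SetConnected G I) :
    excessEnergy G J (flipSpins σ I) σ
      ≥ 2 * J * (((k : ℝ) + 1) - 2 * ((dD : ℝ) + 1)) * (I.ncard : ℝ) :=
  energy_estimate_connected_general G k hG J hJ D hD dD hbdd hdD σ hσD I hIfin hIne hIconn
end

section
/- Let D ⊆ E with d_D finite. For every finite set A ⊆ V (not necessarily connected), the excess energy of σ_A satisfies H(σ_A) - H(σ^{D+}) ≥ 2J[(k+1) - 2(d_D + 1)] · |A|. In particular, if d_D < (k-1)/2, then H(σ_A) - H(σ^{D+}) ≥ 2J(k - 1 - 2 d_D)|A| > 0 for every nonempty finite A. -/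
open Classical

section IsingAux

open SimpleGraph Finset

variable {V : Type*} {G : SimpleGraph V}

lemma isingAux_good_path (hc : G.Connected) (root x : V) :
    ∃ p : G.Walk x root, p.IsPath ∧ p.length ≤ G.dist x root := by
  obtain ⟨w, hw⟩ := (hc.preconnected x root).exists_walk_length_eq_dist
  exact ⟨w.bypass, w.bypass_isPath, hw ▸ w.length_bypass_le⟩

lemma isingAux_support_dist {root x z : V} (p : G.Walk x root)
    (hlen : p.length ≤ G.dist x root) (hz : z ∈ p.support) (hne : z ≠ x) :
    G.dist z root < G.dist x root := by
  have hspec := p.take_spec hz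
  have hlens : (p.takeUntil z hz).length + (p.dropUntil z hz).length = p.length := by
    have := congrArg Walk.length hspec
    rwa [Walk.length_append] at this
  have h1 : (p.takeUntil z hz).length ≠ 0 := fun h0 => hne (Walk.eq_of_length_eq_zero h0).symm
  have h2 : G.dist z root ≤ (p.dropUntil z hz).length := SimpleGraph.dist_le _
  omega

lemma isingAux_dist_ne (hc : G.Connected) (ha : G.IsAcyclic) (root : V)
    {x y : V} (h : G.Adj x y) : G.dist x root ≠ G.dist y root := by
  intro heq
  obtain ⟨px, hpx, hlx⟩ := isingAux_good_path hc root x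
  obtain ⟨py, hpy, hly⟩ := isingAux_good_path hc root y
  have hyns : y ∉ px.support := by
    intro hmem
    have := isingAux_support_dist px hlx hmem h.ne'
    omega
  have hq : (Walk.cons h.symm px).IsPath := hpx.cons hyns
  have huniq := ha.path_unique ⟨Walk.cons h.symm px, hq⟩ ⟨py, hpy⟩
  have hwalk : Walk.cons h.symm px = py := congrArg Subtype.val huniq
  have hxmem : x ∈ py.support := by
    rw [← hwalk]; simp [Walk.support_cons]
  have := isingAux_support_dist py hly hxmem h.ne
  omega

lemma isingAux_parent_unique (hc : G.Connected) (ha : G.IsAcyclic) (root : V)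
    {x y v : V} (hxv : G.Adj x v) (hyv : G.Adj y v)
    (hx : G.dist x root < G.dist v root) (hy : G.dist y root < G.dist v root) : x = y := by
  obtain ⟨px, hpx, hlx⟩ := isingAux_good_path hc root x
  obtain ⟨py, hpy, hly⟩ := isingAux_good_path hc root y
  have hvx : v ∉ px.support := by
    intro hm
    rcases eq_or_ne v x with rfl | hne
    · exact (G.irrefl hxv)
    · have := isingAux_support_dist px hlx hm hne; omega
  have hvy : v ∉ py.support := by
    intro hm
    rcases eq_or_ne v y with rfl | hne
    · exact (G.irrefl hyv)
    · have := isingAux_support_dist py hly hm hne; omega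
  have hq1 : (Walk.cons hxv.symm px).IsPath := hpx.cons hvx
  have hq2 : (Walk.cons hyv.symm py).IsPath := hpy.cons hvy
  have huniq := ha.path_unique ⟨_, hq1⟩ ⟨_, hq2⟩
  have hw : Walk.cons hxv.symm px = Walk.cons hyv.symm py := congrArg Subtype.val huniq
  have hsup := congrArg Walk.support hw
  rw [Walk.support_cons, Walk.support_cons, px.support_eq_cons, py.support_eq_cons] at hsup
  simp only [List.cons.injEq] at hsup
  exact hsup.2.1

lemma isingAux_forest_bound (hc : G.Connected) (ha : G.IsAcyclic) (root : V)
    (Afin : Finset V) (E : Finset (Sym2 V))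
    (hE : ∀ e ∈ E, ∃ x y, e = s(x, y) ∧ G.Adj x y ∧ x ∈ Afin ∧ y ∈ Afin) :
    E.card ≤ Afin.card := by
  classical
  set P : Finset (V × V) := (Afin ×ˢ Afin).filter
    (fun p => G.Adj p.1 p.2 ∧ G.dist p.1 root < G.dist p.2 root) with hP
  have h1 : E ⊆ P.image (fun p => s(p.1, p.2)) := by
    intro e he
    obtain ⟨x, y, rfl, hadj, hx, hy⟩ := hE e he
    have hne := isingAux_dist_ne hc ha root hadj
    rcases hne.lt_or_gt with h | h
    · exact Finset.mem_image.2 ⟨(x, y), by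
        simp only [hP, Finset.mem_filter, Finset.mem_product]; exact ⟨⟨hx, hy⟩, hadj, h⟩, rfl⟩
    · exact Finset.mem_image.2 ⟨(y, x), by
        simp only [hP, Finset.mem_filter, Finset.mem_product]
        exact ⟨⟨hy, hx⟩, hadj.symm, h⟩, Sym2.eq_swap⟩
  calc E.card ≤ (P.image (fun p => s(p.1, p.2))).card := Finset.card_le_card h1
    _ ≤ P.card := Finset.card_image_le
    _ ≤ Afin.card := by
        apply Finset.card_le_card_of_injOn (fun p => p.2)
        · intro p hp
          exact (Finset.mem_product.1 (Finset.mem_filter.1 hp).1).2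
        · intro p hp q hq hpq
          simp only [hP, Finset.mem_coe, Finset.mem_filter] at hp hq
          obtain ⟨-, hadjp, hdp⟩ := hp
          obtain ⟨-, hadjq, hdq⟩ := hq
          have h2 : p.2 = q.2 := hpq
          have h1' : p.1 = q.1 := by
            apply isingAux_parent_unique hc ha root hadjp (h2 ▸ hadjq) hdp (h2 ▸ hdq)
          exact Prod.ext h1' h2

end IsingAux

/-- For every finite set `A` (not necessarily connected),
`H(σ_A) - H(σ^{D+}) ≥ 2J[(k+1) - 2(d_D + 1)]·|A|`; in particular, if `d_D < (k-1)/2`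
then `H(σ_A) - H(σ^{D+}) ≥ 2J(k - 1 - 2 d_D)|A| > 0` for every nonempty finite `A`. -/
theorem energy_estimate_general {V : Type*} (G : SimpleGraph V) (k : ℕ) (hk : 2 ≤ k)
    (hG : IsCayleyTree G k) (root : V) (J : ℝ) (hJ : 0 < J)
    (D : Set (Sym2 V)) (hD : D ⊆ G.edgeSet)
    (dD : ℕ) (hbdd : BddAbove (Set.range fun v => incidentCount D v))
    (hdD : dD = ⨆ v, incidentCount D v)
    (σ : V → ℤ) (hσ : IsSpin σ) (hσroot : σ root = 1) (hσD : SatisfiesD G D σ)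
    (A : Set V) (hAfin : A.Finite) :
    excessEnergy G J (flipSpins σ A) σ
        ≥ 2 * J * (((k : ℝ) + 1) - 2 * ((dD : ℝ) + 1)) * (A.ncard : ℝ)
      ∧ ((dD : ℝ) < ((k : ℝ) - 1) / 2 → A.Nonempty →
          excessEnergy G J (flipSpins σ A) σ
              ≥ 2 * J * ((k : ℝ) - 1 - 2 * (dD : ℝ)) * (A.ncard : ℝ)
            ∧ 0 < excessEnergy G J (flipSpins σ A) σ) := by
  classical
  obtain ⟨hinf, hconn, hacyc, hdeg⟩ := hG
  set F : Sym2 V → ℤ :=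
    Sym2.lift ⟨fun x y => σ x * σ y - flipSpins σ A x * flipSpins σ A y, fun _ _ => by ring⟩
    with hFdef
  -- neighbor sets are finite
  have hnfin : ∀ v : V, (G.neighborSet v).Finite := by
    intro v
    by_contra hinfv
    have h0 : (G.neighborSet v).ncard = 0 := Set.Infinite.ncard hinfv
    rw [hdeg v] at h0
    omega
  -- incidence sets are finite
  have hifin : ∀ v : V, (G.incidenceSet v).Finite := by
    intro v
    have hsub : G.incidenceSet v ⊆ (fun w => s(v, w)) '' (G.neighborSet v) := by
      rintro e ⟨he, hv⟩
      induction e with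
      | h a b =>
        rw [Sym2.mem_iff] at hv
        rcases hv with rfl | rfl
        · exact ⟨b, G.mem_edgeSet.mp he, rfl⟩
        · exact ⟨a, (G.mem_edgeSet.mp he).symm, Sym2.eq_swap⟩
    exact Set.Finite.subset ((hnfin v).image _) hsub
  have hicard : ∀ v : V, (hifin v).toFinset.card = k + 1 := by
    intro v
    have h1 : (G.incidenceSet v).ncard = (G.neighborSet v).ncard := by
      have := Nat.card_congr (G.incidenceSetEquivNeighborSet v)
      simpa [Nat.card_coe_set_eq] using this
    rw [← Set.ncard_eq_toFinset_card _ (hifin v), h1, hdeg v]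
  set Afin : Finset V := hAfin.toFinset with hAfindef
  have hAmem : ∀ v, v ∈ Afin ↔ v ∈ A := fun v => Set.Finite.mem_toFinset _
  set IncFin : Finset (Sym2 V) := Afin.biUnion (fun v => (hifin v).toFinset) with hIncdef
  have hIncMem : ∀ e, e ∈ IncFin ↔ ∃ v ∈ Afin, e ∈ G.incidenceSet v := by
    intro e
    simp [hIncdef, Finset.mem_biUnion, Set.Finite.mem_toFinset]
  have hIncEdge : ∀ e ∈ IncFin, e ∈ G.edgeSet := by
    intro e he
    obtain ⟨v, _, hv⟩ := (hIncMem e).1 he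
    exact hv.1
  set cnt : Sym2 V → ℕ := fun e => (Afin.filter (fun v => v ∈ e)).card with hcntdef
  have hcnt : ∀ x y : V, x ≠ y →
      cnt s(x, y) = (if x ∈ A then 1 else 0) + (if y ∈ A then 1 else 0) := by
    intro x y hxy
    have hfe : Afin.filter (fun v => v ∈ s(x, y)) = Afin.filter (fun v => v = x ∨ v = y) := by
      apply Finset.filter_congr
      intro v _
      simp [Sym2.mem_iff]
    rw [hcntdef]
    simp only [hfe]
    by_cases hx : x ∈ A <;> by_cases hy : y ∈ A
    · have h : Afin.filter (fun v => v = x ∨ v = y) = {x, y} := by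
        ext v
        simp only [Finset.mem_filter, Finset.mem_insert, Finset.mem_singleton, hAmem]
        constructor
        · exact fun h => h.2
        · rintro (rfl | rfl)
          · exact ⟨hx, Or.inl rfl⟩
          · exact ⟨hy, Or.inr rfl⟩
      rw [h, Finset.card_pair hxy, if_pos hx, if_pos hy]
    · have h : Afin.filter (fun v => v = x ∨ v = y) = {x} := by
        ext v
        simp only [Finset.mem_filter, Finset.mem_singleton, hAmem]
        constructor
        · rintro ⟨hv, rfl | rfl⟩
          · rfl
          · exact absurd hv hy
        · rintro rfl
          exact ⟨hx, Or.inl rfl⟩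
      rw [h, Finset.card_singleton, if_pos hx, if_neg hy]
    · have h : Afin.filter (fun v => v = x ∨ v = y) = {y} := by
        ext v
        simp only [Finset.mem_filter, Finset.mem_singleton, hAmem]
        constructor
        · rintro ⟨hv, rfl | rfl⟩
          · exact absurd hv hx
          · rfl
        · rintro rfl
          exact ⟨hy, Or.inr rfl⟩
      rw [h, Finset.card_singleton, if_neg hx, if_pos hy]
    · have h : Afin.filter (fun v => v = x ∨ v = y) = ∅ := by
        ext v
        simp only [Finset.mem_filter, Finset.notMem_empty, iff_false, not_and, hAmem]
        rintro hv (rfl | rfl)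
        · exact hx hv
        · exact hy hv
      rw [h, Finset.card_empty, if_neg hx, if_neg hy]
  have hcnt1 : ∀ e ∈ IncFin, 1 ≤ cnt e := by
    intro e he
    obtain ⟨v, hv, hvi⟩ := (hIncMem e).1 he
    exact Finset.card_pos.mpr ⟨v, Finset.mem_filter.2 ⟨hv, hvi.2⟩⟩
  have hcnt2 : ∀ e ∈ G.edgeSet, cnt e ≤ 2 := by
    intro e he
    induction e with
    | h x y =>
      have hxy : x ≠ y := (G.mem_edgeSet.mp he).ne
      rw [hcnt x y hxy]
      split <;> split <;> omega
  set Bfin : Finset (Sym2 V) := IncFin.filter (fun e => cnt e = 1) with hBdef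
  set E2 : Finset (Sym2 V) := IncFin.filter (fun e => cnt e ≠ 1) with hE2def
  set BD : Finset (Sym2 V) := Bfin.filter (fun e => e ∈ D) with hBDdef
  set nBD : Finset (Sym2 V) := Bfin.filter (fun e => e ∉ D) with hnBDdef
  -- pointwise values of F
  have hF_eq : ∀ x y : V, F s(x, y) = σ x * σ y - flipSpins σ A x * flipSpins σ A y := by
    intro x y; rw [hFdef]; rfl
  have hflipin : ∀ v ∈ A, flipSpins σ A v = -σ v := fun v hv => by simp [flipSpins, hv]
  have hflipout : ∀ v, v ∉ A → flipSpins σ A v = σ v := fun v hv => by simp [flipSpins, hv]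
  have hF0 : ∀ e ∈ G.edgeSet, cnt e ≠ 1 → F e = 0 := by
    intro e he hne
    induction e with
    | h x y =>
      have hxy : x ≠ y := (G.mem_edgeSet.mp he).ne
      rw [hcnt x y hxy] at hne
      by_cases hx : x ∈ A <;> by_cases hy : y ∈ A
      · rw [hF_eq, hflipin x hx, hflipin y hy]; ring
      · simp [hx, hy] at hne
      · simp [hx, hy] at hne
      · rw [hF_eq, hflipout x hx, hflipout y hy]; ring
  have hBval : ∀ e ∈ Bfin, F e = if e ∈ D then -2 else 2 := by
    intro e he
    obtain ⟨heI, hc1⟩ := Finset.mem_filter.1 he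
    have heE := hIncEdge e heI
    induction e with
    | h x y =>
      have hadj : G.Adj x y := G.mem_edgeSet.mp heE
      have hxy : x ≠ y := hadj.ne
      rw [hcnt x y hxy] at hc1
      have h2 : F s(x, y) = 2 * (σ x * σ y) := by
        by_cases hx : x ∈ A <;> by_cases hy : y ∈ A
        · simp [hx, hy] at hc1
        · rw [hF_eq, hflipin x hx, hflipout y hy]; ring
        · rw [hF_eq, hflipout x hx, hflipin y hy]; ring
        · simp [hx, hy] at hc1
      rw [h2]
      by_cases hDe : s(x, y) ∈ D
      · rw [if_pos hDe, (hσD x y hadj).1 hDe]; norm_num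
      · rw [if_neg hDe, (hσD x y hadj).2 hDe]; norm_num
  -- the finsum reduces to a finite sum over Bfin
  have hEE : excessEnergy G J (flipSpins σ A) σ = J * ∑ᶠ e ∈ G.edgeSet, ((F e : ℤ) : ℝ) := rfl
  have hsum : (∑ᶠ e ∈ G.edgeSet, ((F e : ℤ) : ℝ)) = ∑ e ∈ Bfin, ((F e : ℤ) : ℝ) := by
    apply finsum_mem_eq_sum_of_subset
    · rintro e ⟨he, hs⟩
      have hFne : F e ≠ 0 := by
        intro h0
        apply hs
        simp [Function.mem_support, h0]
      have hc1 : cnt e = 1 := by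
        by_contra hne
        exact hFne (hF0 e he hne)
      have heI : e ∈ IncFin := by
        have hpos : 0 < (Afin.filter (fun v => v ∈ e)).card := by
          have h' : (Afin.filter (fun v => v ∈ e)).card = 1 := hc1
          omega
        obtain ⟨v, hv⟩ := Finset.card_pos.1 hpos
        obtain ⟨hvA, hve⟩ := Finset.mem_filter.1 hv
        exact (hIncMem e).2 ⟨v, hvA, he, hve⟩
      exact Finset.mem_coe.2 (Finset.mem_filter.2 ⟨heI, hc1⟩)
    · intro e he
      exact hIncEdge e (Finset.mem_filter.1 (Finset.mem_coe.1 he)).1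
  have hsplit : BD.card + nBD.card = Bfin.card := by
    rw [hBDdef, hnBDdef]
    exact Finset.card_filter_add_card_filter_not _
  have hval : (∑ e ∈ Bfin, ((F e : ℤ) : ℝ)) = -2 * BD.card + 2 * nBD.card := by
    rw [← Finset.sum_filter_add_sum_filter_not Bfin (fun e => e ∈ D)]
    have h1 : ∑ e ∈ BD, ((F e : ℤ) : ℝ) = -2 * BD.card := by
      have hcg : ∀ e ∈ BD, ((F e : ℤ) : ℝ) = -2 := by
        intro e he
        obtain ⟨heB, heD⟩ := Finset.mem_filter.1 he
        rw [hBval e heB, if_pos heD]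
        norm_num
      rw [Finset.sum_congr rfl hcg, Finset.sum_const]
      simp [mul_comm]
    have h2 : ∑ e ∈ nBD, ((F e : ℤ) : ℝ) = 2 * nBD.card := by
      have hcg : ∀ e ∈ nBD, ((F e : ℤ) : ℝ) = 2 := by
        intro e he
        obtain ⟨heB, heD⟩ := Finset.mem_filter.1 he
        rw [hBval e heB, if_neg heD]
        norm_num
      rw [Finset.sum_congr rfl hcg, Finset.sum_const]
      simp [mul_comm]
    rw [← hBDdef, ← hnBDdef, h1, h2]
  -- double counting
  have hcount : Afin.card * (k + 1) = Bfin.card + 2 * E2.card := by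
    have hS1 : ∑ e ∈ IncFin, cnt e = ∑ v ∈ Afin, (IncFin.filter (fun e => v ∈ e)).card := by
      calc ∑ e ∈ IncFin, cnt e
          = ∑ e ∈ IncFin, ∑ v ∈ Afin, (if v ∈ e then 1 else 0) := by
            apply Finset.sum_congr rfl
            intro e _
            exact Finset.card_filter _ _
        _ = ∑ v ∈ Afin, ∑ e ∈ IncFin, (if v ∈ e then 1 else 0) := Finset.sum_comm
        _ = ∑ v ∈ Afin, (IncFin.filter (fun e => v ∈ e)).card := by
            apply Finset.sum_congr rfl
            intro v _
            exact (Finset.card_filter _ _).symm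
    have hfilt : ∀ v ∈ Afin, IncFin.filter (fun e => v ∈ e) = (hifin v).toFinset := by
      intro v hv
      ext e
      simp only [Finset.mem_filter, Set.Finite.mem_toFinset]
      constructor
      · rintro ⟨heI, hve⟩
        exact ⟨hIncEdge e heI, hve⟩
      · rintro ⟨heE, hve⟩
        exact ⟨(hIncMem e).2 ⟨v, hv, heE, hve⟩, hve⟩
    have hS2 : ∑ e ∈ IncFin, cnt e = Afin.card * (k + 1) := by
      rw [hS1, Finset.sum_congr rfl (fun v hv => by rw [hfilt v hv, hicard v]),
        Finset.sum_const, smul_eq_mul]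
    have hS3 : ∑ e ∈ IncFin, cnt e = Bfin.card + 2 * E2.card := by
      rw [← Finset.sum_filter_add_sum_filter_not IncFin (fun e => cnt e = 1), ← hBdef, ← hE2def]
      have h1 : ∑ e ∈ Bfin, cnt e = Bfin.card := by
        rw [Finset.sum_congr rfl (fun e he => (Finset.mem_filter.1 he).2), Finset.sum_const,
          smul_eq_mul, mul_one]
      have h2 : ∑ e ∈ E2, cnt e = 2 * E2.card := by
        rw [Finset.sum_congr rfl (fun e he => ?_), Finset.sum_const, smul_eq_mul, mul_comm]
        obtain ⟨heI, hne⟩ := Finset.mem_filter.1 he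
        have := hcnt1 e heI
        have := hcnt2 e (hIncEdge e heI)
        omega
      rw [h1, h2]
    rw [← hS2, hS3]
  -- forest bound
  have hE2le : E2.card ≤ Afin.card := by
    apply isingAux_forest_bound hconn hacyc root
    intro e he
    obtain ⟨heI, hne⟩ := Finset.mem_filter.1 he
    have heE := hIncEdge e heI
    induction e with
    | h x y =>
      have hadj : G.Adj x y := G.mem_edgeSet.mp heE
      refine ⟨x, y, rfl, hadj, ?_, ?_⟩
      · rw [hAmem]
        have h1 := hcnt1 _ heI
        rw [hcnt x y hadj.ne] at hne h1
        by_contra hx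
        rw [if_neg hx] at hne h1
        by_cases hy2 : y ∈ A
        · rw [if_pos hy2] at hne; omega
        · rw [if_neg hy2] at h1; omega
      · rw [hAmem]
        have h1 := hcnt1 _ heI
        rw [hcnt x y hadj.ne] at hne h1
        by_contra hy
        rw [if_neg hy] at hne h1
        by_cases hx2 : x ∈ A
        · rw [if_pos hx2] at hne; omega
        · rw [if_neg hx2] at h1; omega
  -- bound on BD
  have hDfin : ∀ v : V, ({e ∈ D | v ∈ e} : Set (Sym2 V)).Finite := by
    intro v
    apply (hifin v).subset
    rintro e ⟨heD, hev⟩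
    exact ⟨hD heD, hev⟩
  have hBDle : BD.card ≤ Afin.card * dD := by
    have hsub : BD ⊆ Afin.biUnion (fun v => (hDfin v).toFinset) := by
      intro e he
      obtain ⟨heB, heD⟩ := Finset.mem_filter.1 he
      obtain ⟨heI, -⟩ := Finset.mem_filter.1 heB
      obtain ⟨v, hv, hvi⟩ := (hIncMem e).1 heI
      exact Finset.mem_biUnion.2 ⟨v, hv, (Set.Finite.mem_toFinset _).2 ⟨heD, hvi.2⟩⟩
    calc BD.card ≤ (Afin.biUnion (fun v => (hDfin v).toFinset)).card := Finset.card_le_card hsub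
      _ ≤ ∑ v ∈ Afin, (hDfin v).toFinset.card := Finset.card_biUnion_le
      _ ≤ ∑ v ∈ Afin, dD := by
          apply Finset.sum_le_sum
          intro v _
          have h1 : (hDfin v).toFinset.card = incidentCount D v :=
            (Set.ncard_eq_toFinset_card _ (hDfin v)).symm
          rw [h1, hdD]
          exact le_ciSup hbdd v
      _ = Afin.card * dD := by rw [Finset.sum_const, smul_eq_mul]
  -- assemble
  have hAcard : A.ncard = Afin.card := Set.ncard_eq_toFinset_card _ hAfin
  have hEEval : excessEnergy G J (flipSpins σ A) σ
      = J * (-2 * BD.card + 2 * nBD.card) := by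
    rw [hEE, hsum, hval]
  have hkey : (-2 * (BD.card : ℝ) + 2 * nBD.card)
      ≥ 2 * (((k : ℝ) + 1) - 2 * ((dD : ℝ) + 1)) * (A.ncard : ℝ) := by
    have hc1 : (Afin.card : ℝ) * ((k : ℝ) + 1) = (Bfin.card : ℝ) + 2 * E2.card := by
      exact_mod_cast congrArg (fun n : ℕ => (n : ℝ)) hcount
    have hc2 : (E2.card : ℝ) ≤ (Afin.card : ℝ) := by exact_mod_cast hE2le
    have hc3 : (BD.card : ℝ) ≤ (Afin.card : ℝ) * dD := by exact_mod_cast hBDle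
    have hc4 : (BD.card : ℝ) + nBD.card = Bfin.card := by exact_mod_cast hsplit
    rw [hAcard]
    nlinarith [hc1, hc2, hc3, hc4]
  have hmain : excessEnergy G J (flipSpins σ A) σ
      ≥ 2 * J * (((k : ℝ) + 1) - 2 * ((dD : ℝ) + 1)) * (A.ncard : ℝ) := by
    rw [hEEval]
    have := mul_le_mul_of_nonneg_left hkey hJ.le
    nlinarith [this]
  refine ⟨hmain, fun hlt hne => ?_⟩
  have heq2 : 2 * J * ((k : ℝ) - 1 - 2 * (dD : ℝ)) * (A.ncard : ℝ)
      = 2 * J * (((k : ℝ) + 1) - 2 * ((dD : ℝ) + 1)) * (A.ncard : ℝ) := by ring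
  have hbound : excessEnergy G J (flipSpins σ A) σ
      ≥ 2 * J * ((k : ℝ) - 1 - 2 * (dD : ℝ)) * (A.ncard : ℝ) := by
    rw [heq2]; exact hmain
  refine ⟨hbound, ?_⟩
  have hpos1 : (0 : ℝ) < (k : ℝ) - 1 - 2 * dD := by linarith
  have hpos2 : (0 : ℝ) < (A.ncard : ℝ) := by
    have := Set.ncard_pos hAfin |>.mpr hne
    exact_mod_cast this
  calc (0 : ℝ) < 2 * J * ((k : ℝ) - 1 - 2 * (dD : ℝ)) * (A.ncard : ℝ) := by positivity
    _ ≤ excessEnergy G J (flipSpins σ A) σ := hbound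
end

section
/- (Theorem 1) Let D ⊆ E satisfy d_D < (k-1)/2. Then σ^{D+} and σ^{D-} are ground state configurations: for every spin configuration σ that differs from σ^{D+} (respectively from σ^{D-}) at only finitely many vertices, the excess energy H(σ) - H(σ^{D+}) (respectively H(σ) - H(σ^{D-})) is nonnegative. -/
open Classical

/-!
Flipping the spins on a finite set `C` changes the energy only across the edge boundary `∂C`,
where each edge contributes `-2J` if it lies in `D` and `+2J` otherwise, and at most `d_D |C|`
boundary edges lie in `D`. In a forest whose vertices all have degree `k + 1`, the handshake
identity `(k + 1)|C| = 2|E(C)| + |∂C|` together with `|E(C)| ≤ |C|` gives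
`|∂C| ≥ (k - 1)|C| ≥ 2 d_D |C|`, so at most half of the boundary edges are frustrated.
-/

open Finset

lemma Finset.filter_mem_mk_eq_inter {V : Type*} (C : Finset V) (x y : V) :
    C.filter (· ∈ s(x, y)) = {x, y} ∩ C := by
  ext v
  simp [and_comm, eq_comm]

namespace SimpleGraph

variable {V : Type*} {G : SimpleGraph V}

lemma IsAcyclic.card_edgeFinset_le [Fintype V] [Fintype G.edgeSet] (hG : G.IsAcyclic) :
    #G.edgeFinset ≤ Fintype.card V := by
  cases isEmpty_or_nonempty V
  · simp [Finset.eq_empty_of_isEmpty G.edgeFinset]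
  obtain ⟨T, hGT, -, hT⟩ := (connected_top (V := V)).exists_isTree_le_of_le_of_isAcyclic le_top hG
  calc #G.edgeFinset ≤ #T.edgeFinset := card_le_card (edgeFinset_mono hGT)
    _ ≤ Fintype.card V := (Nat.le_succ _).trans_eq hT.card_edgeFinset

noncomputable def interiorEdges (G : SimpleGraph V) (C : Finset V) : Finset (Sym2 V) :=
  C.sym2.filter (· ∈ G.edgeSet)

noncomputable def edgeBoundary (G : SimpleGraph V) [G.LocallyFinite] (C : Finset V) :
    Finset (Sym2 V) :=
  (C.biUnion fun v => G.incidenceFinset v) \ C.sym2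

@[simp]
lemma mk_mem_interiorEdges {C : Finset V} {x y : V} :
    s(x, y) ∈ G.interiorEdges C ↔ G.Adj x y ∧ x ∈ C ∧ y ∈ C := by
  simp [interiorEdges, and_comm]

@[simp]
lemma mk_mem_edgeBoundary [G.LocallyFinite] {C : Finset V} {x y : V} :
    s(x, y) ∈ G.edgeBoundary C ↔ G.Adj x y ∧ ¬(x ∈ C ↔ y ∈ C) := by
  simp only [edgeBoundary, mem_sdiff, mem_biUnion, mem_incidenceFinset, mk'_mem_incidenceSet_iff,
    mk_mem_sym2_iff]
  grind

lemma IsAcyclic.card_interiorEdges_le (hG : G.IsAcyclic) (C : Finset V) :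
    #(G.interiorEdges C) ≤ #C := by
  have hsurj : Set.SurjOn (Sym2.map Subtype.val)
      ((G.induce (C : Set V)).edgeFinset : Set (Sym2 (C : Set V)))
      (G.interiorEdges C : Set (Sym2 V)) := by
    intro e he
    induction e using Sym2.ind with
    | _ x y =>
      obtain ⟨hxy, hx, hy⟩ := mk_mem_interiorEdges.1 he
      exact ⟨s(⟨x, hx⟩, ⟨y, hy⟩), by simpa using hxy, rfl⟩
  calc #(G.interiorEdges C) ≤ #(G.induce (C : Set V)).edgeFinset := card_le_card_of_surjOn _ hsurj
    _ ≤ Fintype.card (C : Set V) := (hG.induce _).card_edgeFinset_le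
    _ = #C := by simp

lemma card_filter_mem_of_mem_interiorEdges {C : Finset V} {e : Sym2 V}
    (he : e ∈ G.interiorEdges C) : #(C.filter (· ∈ e)) = 2 := by
  induction e using Sym2.ind with
  | _ x y =>
    obtain ⟨hxy, hx, hy⟩ := mk_mem_interiorEdges.1 he
    rw [filter_mem_mk_eq_inter, inter_eq_left.2 (insert_subset hx (singleton_subset_iff.2 hy)),
      card_pair hxy.ne]

lemma card_filter_mem_of_mem_edgeBoundary [G.LocallyFinite] {C : Finset V} {e : Sym2 V}
    (he : e ∈ G.edgeBoundary C) : #(C.filter (· ∈ e)) = 1 := by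
  induction e using Sym2.ind with
  | _ x y =>
    obtain ⟨-, hxy⟩ := mk_mem_edgeBoundary.1 he
    rw [filter_mem_mk_eq_inter]
    by_cases hx : x ∈ C
    · rw [insert_inter_of_mem hx, singleton_inter_of_notMem (by tauto), insert_empty,
        card_singleton]
    · rw [insert_inter_of_notMem hx, singleton_inter_of_mem (by tauto), card_singleton]

lemma sum_degree_eq_two_mul_card_interiorEdges_add_card_edgeBoundary [G.LocallyFinite]
    (C : Finset V) : ∑ v ∈ C, G.degree v = 2 * #(G.interiorEdges C) + #(G.edgeBoundary C) := by
  set U := C.biUnion fun v => G.incidenceFinset v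
  have hU : ∀ v ∈ C, U.bipartiteAbove (· ∈ ·) v = G.incidenceFinset v := fun v hv => by
    ext e
    simp only [bipartiteAbove, mem_filter, U, mem_biUnion, mem_incidenceFinset, incidenceSet,
      Set.mem_ofPred_eq]
    grind
  have hI : U.filter (· ∈ C.sym2) = G.interiorEdges C := by
    ext e
    simp only [interiorEdges, mem_filter, U, mem_biUnion, mem_incidenceFinset, incidenceSet,
      Set.mem_ofPred_eq, mem_sym2_iff]
    exact ⟨fun ⟨⟨_, _, he, _⟩, h⟩ => ⟨h, he⟩,
      fun ⟨h, he⟩ => ⟨⟨_, h _ e.out_fst_mem, he, e.out_fst_mem⟩, h⟩⟩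
  have hB : U.filter (· ∉ C.sym2) = G.edgeBoundary C := by rw [edgeBoundary, sdiff_eq_filter]
  calc ∑ v ∈ C, G.degree v = ∑ v ∈ C, #(U.bipartiteAbove (· ∈ ·) v) :=
        sum_congr rfl fun v hv => by rw [hU v hv, card_incidenceFinset_eq_degree]
    _ = ∑ e ∈ U, #(C.filter (· ∈ e)) := sum_card_bipartiteAbove_eq_sum_card_bipartiteBelow _
    _ = 2 * #(G.interiorEdges C) + #(G.edgeBoundary C) := by
      rw [← sum_filter_add_sum_filter_not U (· ∈ C.sym2), hI, hB,
        sum_congr rfl fun _ he => card_filter_mem_of_mem_interiorEdges he,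
        sum_congr rfl fun _ he => card_filter_mem_of_mem_edgeBoundary he]
      simp [mul_comm]

lemma card_filter_mem_edgeBoundary_le [G.LocallyFinite] (D : Set (Sym2 V)) {d : ℕ}
    (hd : ∀ v, #((G.incidenceFinset v).filter (· ∈ D)) ≤ d) (C : Finset V) :
    #((G.edgeBoundary C).filter (· ∈ D)) ≤ #C * d := by
  calc #((G.edgeBoundary C).filter (· ∈ D))
      ≤ #(C.biUnion fun v => (G.incidenceFinset v).filter (· ∈ D)) := by
        rw [← filter_biUnion]
        exact card_le_card (filter_subset_filter _ sdiff_subset)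
    _ ≤ #C * d := card_biUnion_le_card_mul _ _ _ fun v _ => hd v

end SimpleGraph

open SimpleGraph

section

variable {V : Type*} {G : SimpleGraph V} {D : Set (Sym2 V)}

lemma incidentCount_eq_card_filter (hD : D ⊆ G.edgeSet) (v : V) [Fintype (G.neighborSet v)] :
    incidentCount D v = #((G.incidenceFinset v).filter (· ∈ D)) := by
  rw [incidentCount, ← Set.ncard_coe_finset]
  congr 1
  ext e
  simp only [Set.mem_ofPred_eq, coe_filter, mem_incidenceFinset, incidenceSet]
  exact ⟨fun ⟨h, hv⟩ => ⟨⟨hD h, hv⟩, h⟩, fun ⟨⟨_, hv⟩, h⟩ => ⟨h, hv⟩⟩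

lemma IsSpin.neg {σ : V → ℤ} (hσ : IsSpin σ) : IsSpin fun v => -σ v := fun v => by
  rcases hσ v with h | h <;> simp [h]

lemma SatisfiesD.neg {σ : V → ℤ} (hσ : SatisfiesD G D σ) : SatisfiesD G D fun v => -σ v := by
  intro x y hxy
  simpa only [neg_mul_neg] using hσ x y hxy

lemma IsSpin.eq_flipSpins {σ τ : V → ℤ} (hσ : IsSpin σ) (hτ : IsSpin τ) :
    τ = flipSpins σ {v | τ v ≠ σ v} := by
  funext v
  rcases hσ v with h | h <;> rcases hτ v with h' | h' <;> simp [flipSpins, h, h']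

lemma flipSpins_mul_flipSpins (σ : V → ℤ) (C : Set V) (x y : V) :
    flipSpins σ C x * flipSpins σ C y = if (x ∈ C ↔ y ∈ C) then σ x * σ y else -(σ x * σ y) := by
  by_cases hx : x ∈ C <;> by_cases hy : y ∈ C <;> simp [flipSpins, hx, hy]

lemma excessEnergy_flipSpins [G.LocallyFinite] {σ : V → ℤ} (hσ : SatisfiesD G D σ) (J : ℝ)
    (C : Finset V) :
    excessEnergy G J (flipSpins σ C) σ = J * ∑ e ∈ G.edgeBoundary C, if e ∈ D then -2 else 2 := by
  unfold excessEnergy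
  congr 1
  rw [finsum_mem_eq_sum_of_subset]
  · refine sum_congr rfl fun e he => ?_
    induction e using Sym2.ind with
    | _ x y =>
      obtain ⟨hxy, hx⟩ := mk_mem_edgeBoundary.1 he
      simp only [Sym2.lift_mk, flipSpins_mul_flipSpins, mem_coe, if_neg hx, sub_neg_eq_add]
      by_cases hD : s(x, y) ∈ D <;> simp [hD, (hσ x y hxy).1, (hσ x y hxy).2]
  · rintro e ⟨he, hne⟩
    induction e using Sym2.ind with
    | _ x y =>
      refine mk_mem_edgeBoundary.2 ⟨he, fun hx => hne ?_⟩
      simp [flipSpins_mul_flipSpins, hx]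
  · intro e he
    induction e using Sym2.ind with
    | _ x y => exact (mk_mem_edgeBoundary.1 he).1

theorem excessEnergy_nonneg [G.LocallyFinite] {k d : ℕ} (hG : G.IsAcyclic)
    (hdeg : ∀ v, G.degree v = k + 1) (hd : ∀ v, #((G.incidenceFinset v).filter (· ∈ D)) ≤ d)
    (hdk : 2 * d + 1 ≤ k) {J : ℝ} (hJ : 0 ≤ J) {σ τ : V → ℤ} (hσ : IsSpin σ)
    (hσD : SatisfiesD G D σ) (hτ : IsSpin τ) (hfin : {v | τ v ≠ σ v}.Finite) :
    0 ≤ excessEnergy G J τ σ := by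
  set C := hfin.toFinset
  rw [hσ.eq_flipSpins hτ, ← hfin.coe_toFinset, excessEnergy_flipSpins hσD, sum_ite, sum_const,
    sum_const]
  set B := G.edgeBoundary C
  have hfrustrated := card_filter_mem_edgeBoundary_le D hd C
  have hhandshake := sum_degree_eq_two_mul_card_interiorEdges_add_card_edgeBoundary (G := G) C
  rw [sum_congr rfl fun v _ => hdeg v, sum_const, smul_eq_mul] at hhandshake
  have hinterior := hG.card_interiorEdges_le C
  have hsplit := card_filter_add_card_filter_not (s := B) (· ∈ D)
  have hle : #(B.filter (· ∈ D)) ≤ #(B.filter (· ∉ D)) := by nlinarith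
  have hle' : (#(B.filter (· ∈ D)) : ℝ) ≤ #(B.filter (· ∉ D)) := by exact_mod_cast hle
  rw [nsmul_eq_mul, nsmul_eq_mul]
  exact mul_nonneg hJ (by linarith)

lemma IsCayleyTree.finite_neighborSet {k : ℕ} (hG : IsCayleyTree G k) (v : V) :
    (G.neighborSet v).Finite :=
  Set.finite_of_ncard_ne_zero (by rw [hG.degree v]; omega)

lemma IsCayleyTree.degree_eq {k : ℕ} [G.LocallyFinite] (hG : IsCayleyTree G k) (v : V) :
    G.degree v = k + 1 := by
  rw [← card_neighborFinset_eq_degree, neighborFinset, ← Set.ncard_eq_toFinset_card', hG.degree v]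

end

theorem ground_states_general {V : Type*} (G : SimpleGraph V) (k : ℕ)
    (hG : IsCayleyTree G k) (J : ℝ) (hJ : 0 < J)
    (D : Set (Sym2 V)) (hD : D ⊆ G.edgeSet)
    (dD : ℕ) (hbdd : BddAbove (Set.range fun v => incidentCount D v))
    (hdD : dD = ⨆ v, incidentCount D v)
    (hsmall : (dD : ℝ) < ((k : ℝ) - 1) / 2)
    (σ : V → ℤ) (hσ : IsSpin σ) (hσD : SatisfiesD G D σ) :
    (∀ τ : V → ℤ, IsSpin τ → {v : V | τ v ≠ σ v}.Finite →
        0 ≤ excessEnergy G J τ σ)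
      ∧ (∀ τ : V → ℤ, IsSpin τ → {v : V | τ v ≠ -σ v}.Finite →
        0 ≤ excessEnergy G J τ (fun v => -σ v)) := by
  let _ : G.LocallyFinite := fun v => (hG.finite_neighborSet v).fintype
  have hd : ∀ v, #((G.incidenceFinset v).filter (· ∈ D)) ≤ dD := fun v => by
    rw [← incidentCount_eq_card_filter hD, hdD]
    exact le_ciSup hbdd v
  have hdk : 2 * dD + 1 ≤ k := by
    have : (2 * dD + 1 : ℝ) < k := by linarith
    exact_mod_cast this.le
  exact ⟨fun τ hτ hfin =>
      excessEnergy_nonneg hG.acyclic hG.degree_eq hd hdk hJ.le hσ hσD hτ hfin,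
    fun τ hτ hfin =>
      excessEnergy_nonneg hG.acyclic hG.degree_eq hd hdk hJ.le hσ.neg hσD.neg hτ hfin⟩

/-- Theorem 1: If `d_D < (k-1)/2`, then `σ^{D+}` and `σ^{D-} = -σ^{D+}`
are ground state configurations: every spin configuration differing from them at
finitely many vertices has nonnegative excess energy. -/
theorem ground_states {V : Type*} (G : SimpleGraph V) (k : ℕ) (hk : 2 ≤ k)
    (hG : IsCayleyTree G k) (root : V) (J : ℝ) (hJ : 0 < J)
    (D : Set (Sym2 V)) (hD : D ⊆ G.edgeSet)
    (dD : ℕ) (hbdd : BddAbove (Set.range fun v => incidentCount D v))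
    (hdD : dD = ⨆ v, incidentCount D v)
    (hsmall : (dD : ℝ) < ((k : ℝ) - 1) / 2)
    (σ : V → ℤ) (hσ : IsSpin σ) (hσroot : σ root = 1) (hσD : SatisfiesD G D σ) :
    (∀ τ : V → ℤ, IsSpin τ → {v : V | τ v ≠ σ v}.Finite →
        0 ≤ excessEnergy G J τ σ)
      ∧ (∀ τ : V → ℤ, IsSpin τ → {v : V | τ v ≠ -σ v}.Finite →
        0 ≤ excessEnergy G J τ (fun v => -σ v)) :=
  ground_states_general G k hG J hJ D hD dD hbdd hdD hsmall σ hσ hσD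
end

section
/- Let G be a (finite or countable) simple graph of maximal degree k+1, and let v be a vertex of G. Then for every n ≥ 1 the number of connected subgraphs of G with exactly n edges containing the vertex v is at most (k+1)^{2n}. -/
open Classical

/-!
Doubling every edge of a connected graph with `n` edges makes all degrees even, so the graph is
traced out by a closed walk of length `2n` from any of its vertices. A connected subgraph through
`v` with `n` edges is therefore the trace of a closed walk of length `2n` at `v`, and there are at
most `(k+1)^{2n}` such walks.
-/

namespace SimpleGraph

variable {V : Type*} {G : SimpleGraph V}

theorem mk_mem_edgeSet_toSubgraph_connectedComponentMk {u x y : V} :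
    s(x, y) ∈ (G.connectedComponentMk u).toSubgraph.edgeSet ↔
      G.Adj x y ∧ G.Reachable u x := by
  simp only [Subgraph.mem_edgeSet, Subgraph.induce_adj, ConnectedComponent.mem_supp_iff,
    ConnectedComponent.eq, Subgraph.top_adj]
  constructor
  · rintro ⟨hx, -, hxy⟩
    exact ⟨hxy, hx.symm⟩
  · rintro ⟨hxy, hx⟩
    exact ⟨hx.symm, (hx.trans hxy.reachable).symm, hxy⟩

theorem Reachable.reachable_deleteEdges_or {u b x : V} (h : G.Reachable u x) :
    (G.deleteEdges {s(u, b)}).Reachable u x ∨ (G.deleteEdges {s(u, b)}).Reachable b x := by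
  obtain ⟨p⟩ := h.symm
  clear h
  induction p with
  | nil => exact .inl .rfl
  | @cons x c u hxc p ih =>
    by_cases he : s(x, c) = s(u, b)
    · rcases Sym2.eq_iff.mp he with ⟨rfl, -⟩ | ⟨rfl, -⟩
      exacts [.inl .rfl, .inr .rfl]
    · have hcx : (G.deleteEdges {s(u, b)}).Reachable c x :=
        (deleteEdges_adj.mpr ⟨hxc, he⟩).symm.reachable
      exact ih.imp (·.trans hcx) (·.trans hcx)

theorem edgeSet_toSubgraph_connectedComponentMk_diff {u b : V} (hub : G.Adj u b) :
    (G.connectedComponentMk u).toSubgraph.edgeSet \ {s(u, b)} =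
      ((G.deleteEdges {s(u, b)}).connectedComponentMk u).toSubgraph.edgeSet ∪
        ((G.deleteEdges {s(u, b)}).connectedComponentMk b).toSubgraph.edgeSet := by
  ext e
  induction e using Sym2.ind with
  | _ x y =>
  simp only [Set.mem_sdiff, Set.mem_union, Set.mem_singleton_iff,
    mk_mem_edgeSet_toSubgraph_connectedComponentMk, deleteEdges_adj]
  have hle := G.deleteEdges_le {s(u, b)}
  constructor
  · rintro ⟨⟨hxy, hx⟩, hne⟩
    exact hx.reachable_deleteEdges_or.imp (⟨⟨hxy, hne⟩, ·⟩) (⟨⟨hxy, hne⟩, ·⟩)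
  · rintro (⟨⟨hxy, hne⟩, hx⟩ | ⟨⟨hxy, hne⟩, hx⟩)
    · exact ⟨⟨hxy, hx.mono hle⟩, hne⟩
    · exact ⟨⟨hxy, hub.reachable.trans (hx.mono hle)⟩, hne⟩

theorem disjoint_edgeSet_toSubgraph_connectedComponentMk {u b : V} (h : ¬G.Reachable u b) :
    Disjoint (G.connectedComponentMk u).toSubgraph.edgeSet
      (G.connectedComponentMk b).toSubgraph.edgeSet := by
  refine Set.disjoint_left.mpr fun e hu hb => ?_
  induction e using Sym2.ind with
  | _ x y =>
  rw [mk_mem_edgeSet_toSubgraph_connectedComponentMk] at hu hb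
  exact h (hu.2.trans hb.2.symm)

theorem exists_adj_of_edgeSet_toSubgraph_connectedComponentMk_nonempty {u : V}
    (h : (G.connectedComponentMk u).toSubgraph.edgeSet.Nonempty) : ∃ b, G.Adj u b := by
  obtain ⟨e, he⟩ := h
  induction e using Sym2.ind with
  | _ x y =>
  obtain ⟨hxy, ⟨p⟩⟩ := mk_mem_edgeSet_toSubgraph_connectedComponentMk.mp he
  cases p with
  | nil => exact ⟨y, hxy⟩
  | cons h _ => exact ⟨_, h⟩

/- Induction on the number of edges: delete an edge `ub`. The rest of the component of `u` is
covered by the components of `u` and `b` in the smaller graph. If these coincide, go along `ub`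
and back, then around it; otherwise go along `ub`, around the component of `b`, back along `ub`
and around the component of `u`. -/
theorem exists_closedWalk_covering_edgeSet_connectedComponentMk (u : V)
    (hfin : (G.connectedComponentMk u).toSubgraph.edgeSet.Finite) :
    ∃ p : G.Walk u u, p.length = 2 * (G.connectedComponentMk u).toSubgraph.edgeSet.ncard ∧
      (G.connectedComponentMk u).toSubgraph.edgeSet ⊆ p.edgeSet := by
  induction hn : (G.connectedComponentMk u).toSubgraph.edgeSet.ncard using Nat.strong_induction_on
    generalizing G u with
  | _ n ih =>
  set E := (G.connectedComponentMk u).toSubgraph.edgeSet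
  rcases E.eq_empty_or_nonempty with hE | hne
  · exact ⟨.nil, by simp [← hn, hE], by simp [hE]⟩
  obtain ⟨b, hub⟩ := exists_adj_of_edgeSet_toSubgraph_connectedComponentMk_nonempty hne
  have hle : G.deleteEdges {s(u, b)} ≤ G := G.deleteEdges_le _
  have hubE : s(u, b) ∈ E := mk_mem_edgeSet_toSubgraph_connectedComponentMk.mpr ⟨hub, .rfl⟩
  have hpos : 0 < n := hn ▸ (Set.ncard_pos hfin).mpr ⟨_, hubE⟩
  have hcard : (E \ {s(u, b)}).ncard = n - 1 := by
    rw [Set.ncard_sdiff_singleton_of_mem hubE, hn]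
  have hsplit := edgeSet_toSubgraph_connectedComponentMk_diff hub
  have hE := Set.subset_insert_sdiff_singleton (s(u, b)) E
  by_cases hr : (G.deleteEdges {s(u, b)}).Reachable u b
  · rw [← ConnectedComponent.eq.mpr hr, Set.union_self] at hsplit
    obtain ⟨p, hp, hcov⟩ := ih (n - 1) (by omega) u (hsplit ▸ hfin.sdiff) (hsplit ▸ hcard)
    refine ⟨.cons hub (.cons hub.symm (p.mapLe hle)), ?_, ?_⟩
    · simp only [Walk.length_cons, Walk.length_mapLe, hp]
      omega
    · rw [hsplit] at hE
      simp only [Walk.edgeSet_cons, Walk.edgeSet_mapLe_eq_edgeSet]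
      exact hE.trans (Set.insert_subset_insert (hcov.trans (Set.subset_insert _ _)))
  · have hfu := hfin.sdiff.subset (hsplit ▸ Set.subset_union_left)
    have hfb := hfin.sdiff.subset (hsplit ▸ Set.subset_union_right)
    rw [hsplit, Set.ncard_union_eq (disjoint_edgeSet_toSubgraph_connectedComponentMk hr) hfu hfb]
      at hcard
    obtain ⟨pu, hpu, hcovu⟩ := ih _ (by omega) u hfu rfl
    obtain ⟨pb, hpb, hcovb⟩ := ih _ (by omega) b hfb rfl
    refine ⟨.cons hub ((pb.mapLe hle).append (.cons hub.symm (pu.mapLe hle))), ?_, ?_⟩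
    · simp only [Walk.length_cons, Walk.length_append, Walk.length_mapLe, hpu, hpb]
      omega
    · rw [hsplit] at hE
      simp only [Walk.edgeSet_cons, Walk.edgeSet_append, Walk.edgeSet_mapLe_eq_edgeSet]
      refine hE.trans (Set.insert_subset_insert (Set.union_subset ?_ (hcovb.trans ?_)))
      · exact hcovu.trans (Set.subset_union_of_subset_right (Set.subset_insert _ _) _)
      · exact Set.subset_union_left

theorem card_finsetWalkLength_le [DecidableEq V] [LocallyFinite G] {d : ℕ}
    (hd : ∀ v, G.degree v ≤ d) (n : ℕ) (u v : V) :
    (G.finsetWalkLength n u v).card ≤ d ^ n := by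
  induction n generalizing u with
  | zero =>
    unfold finsetWalkLength
    split_ifs with h
    · subst h; simp
    · simp
  | succ n ih =>
    calc (G.finsetWalkLength (n + 1) u v).card
        ≤ ∑ w : G.neighborSet u, (G.finsetWalkLength n w v).card := by
          rw [finsetWalkLength]
          exact Finset.card_biUnion_le.trans (Finset.sum_le_sum fun w _ => Finset.card_map _ |>.le)
      _ ≤ ∑ _w : G.neighborSet u, d ^ n := Finset.sum_le_sum fun w _ => ih w
      _ = G.degree u * d ^ n := by
          rw [Finset.sum_const, Finset.card_univ, card_neighborSet_eq_degree, smul_eq_mul]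
      _ ≤ d ^ (n + 1) := by rw [pow_succ']; exact Nat.mul_le_mul_right _ (hd u)

theorem ncard_setOf_walk_length_le [LocallyFinite G] {d : ℕ} (hd : ∀ v, G.degree v ≤ d)
    (n : ℕ) (u v : V) : {p : G.Walk u v | p.length = n}.ncard ≤ d ^ n := by
  rw [← coe_finsetWalkLength_eq, Set.ncard_coe_finset]
  exact card_finsetWalkLength_le hd n u v

theorem Walk.toSubgraph_le_of_edgeSet_subset {H : G.Subgraph} {u v : V} {p : G.Walk u v}
    (hu : u ∈ H.verts) (hp : p.edgeSet ⊆ H.edgeSet) : p.toSubgraph ≤ H := by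
  by_cases hnil : p.Nil
  · cases hnil
    simpa using hu
  · exact (Walk.toSubgraph_le_iff hnil).mpr hp

theorem Subgraph.Connected.exists_walk_toSubgraph_eq {H : G.Subgraph} (hc : H.Connected)
    {u : V} (hu : u ∈ H.verts) (hfin : H.edgeSet.Finite) :
    ∃ p : G.Walk u u, p.length = 2 * H.edgeSet.ncard ∧ p.toSubgraph = H := by
  have hreach (x : V) (hx : x ∈ H.verts) : H.spanningCoe.Reachable u x :=
    (hc ⟨u, hu⟩ ⟨x, hx⟩).map ⟨Subtype.val, id⟩
  have hE : (H.spanningCoe.connectedComponentMk u).toSubgraph.edgeSet = H.edgeSet := by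
    ext e
    induction e using Sym2.ind with
    | _ x y =>
    rw [mk_mem_edgeSet_toSubgraph_connectedComponentMk, Subgraph.mem_edgeSet,
      Subgraph.spanningCoe_adj]
    exact ⟨And.left, fun h => ⟨h, hreach x (H.edge_vert h)⟩⟩
  obtain ⟨q, hq, hcov⟩ :=
    exists_closedWalk_covering_edgeSet_connectedComponentMk u (hE ▸ hfin)
  rw [hE] at hq hcov
  set p := q.mapLe H.spanningCoe_le
  have hpq : p.edges = q.edges := Walk.edges_mapLe_eq_edges _ _
  have hcov' {x y : V} (h : H.Adj x y) : s(x, y) ∈ p.edges := hpq ▸ hcov h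
  refine ⟨p, by rw [Walk.length_mapLe, hq],
    le_antisymm ?_ (show _ ∧ _ from ⟨fun x hx => ?_, fun x y h => ?_⟩)⟩
  · exact Walk.toSubgraph_le_of_edgeSet_subset hu fun e he =>
      H.edgeSet_spanningCoe ▸ q.edges_subset_edgeSet (hpq ▸ he)
  · obtain ⟨w⟩ := (hreach x hx).symm
    cases w with
    | nil => exact p.start_mem_verts_toSubgraph
    | cons h _ =>
      exact p.mem_verts_toSubgraph.mpr (p.fst_mem_support_of_mem_edges (hcov' h))
  · exact Walk.adj_toSubgraph_iff_mem_edges.mpr (hcov' h)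

end SimpleGraph

theorem connected_subgraph_count_general {V : Type*} (G : SimpleGraph V) (k : ℕ)
    (hdeg : ∀ v : V, (G.neighborSet v).Finite ∧ (G.neighborSet v).ncard ≤ k + 1)
    (v : V) (n : ℕ) :
    {H : G.Subgraph | H.Connected ∧ v ∈ H.verts ∧ H.edgeSet.Finite
        ∧ H.edgeSet.ncard = n}.Finite
      ∧ {H : G.Subgraph | H.Connected ∧ v ∈ H.verts ∧ H.edgeSet.Finite
        ∧ H.edgeSet.ncard = n}.ncard ≤ (k + 1) ^ (2 * n) := by
  set S :=
    {H : G.Subgraph | H.Connected ∧ v ∈ H.verts ∧ H.edgeSet.Finite ∧ H.edgeSet.ncard = n}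
  set W := {p : G.Walk v v | p.length = 2 * n}
  have : G.LocallyFinite := fun w => (hdeg w).1.fintype
  have hdegree (w : V) : G.degree w ≤ k + 1 := by
    rw [← SimpleGraph.card_neighborSet_eq_degree, ← Nat.card_eq_fintype_card,
      Nat.card_coe_set_eq]
    exact (hdeg w).2
  have hSW : S ⊆ SimpleGraph.Walk.toSubgraph '' W := by
    rintro H ⟨hc, hv, hfin, rfl⟩
    obtain ⟨p, hp, rfl⟩ := hc.exists_walk_toSubgraph_eq hv hfin
    exact ⟨p, hp, rfl⟩
  have hW : (SimpleGraph.Walk.toSubgraph '' W).Finite := W.toFinite.image _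
  refine ⟨hW.subset hSW, ?_⟩
  calc S.ncard ≤ (SimpleGraph.Walk.toSubgraph '' W).ncard := Set.ncard_le_ncard hSW hW
    _ ≤ W.ncard := Set.ncard_image_le W.toFinite
    _ ≤ (k + 1) ^ (2 * n) := SimpleGraph.ncard_setOf_walk_length_le hdegree _ v v

/-- In a (finite or countable) simple graph of maximal degree `k+1`, for
every `n ≥ 1` the number of connected subgraphs with exactly `n` edges containing a
given vertex `v` is at most `(k+1)^{2n}`. -/
theorem connected_subgraph_count {V : Type*} [Countable V] (G : SimpleGraph V) (k : ℕ)
    (hdeg : ∀ v : V, (G.neighborSet v).Finite ∧ (G.neighborSet v).ncard ≤ k + 1)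
    (v : V) (n : ℕ) (hn : 1 ≤ n) :
    {H : G.Subgraph | H.Connected ∧ v ∈ H.verts ∧ H.edgeSet.Finite
        ∧ H.edgeSet.ncard = n}.Finite
      ∧ {H : G.Subgraph | H.Connected ∧ v ∈ H.verts ∧ H.edgeSet.Finite
        ∧ H.edgeSet.ncard = n}.ncard ≤ (k + 1) ^ (2 * n) :=
  connected_subgraph_count_general G k hdeg v n
end

section
/- (Theorem 2: stability) Let D ⊆ E satisfy d_D < (k-1)/2. Then the ground state configuration σ^{D+} is stable: for every energy level E > 0 there exists an integer N, depending only on E, k, J and d_D (in particular not on the vertex v nor on D), such that for every vertex v ∈ V the number of finite nonempty connected sets C ⊆ V with v ∈ C and H(σ_C) - H(σ^{D+}) < E is at most N. The same holds for σ^{D-}. -/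
open Classical

section StabilityAux

open SimpleGraph

variable {V : Type*} {G : SimpleGraph V} {k : ℕ}

lemma nbr_finite (hG : IsCayleyTree G k) (v : V) : (G.neighborSet v).Finite := by
  by_contra h
  have h2 : (G.neighborSet v).Infinite := h
  have := h2.ncard
  rw [hG.degree v] at this
  omega

noncomputable def nbrF (hG : IsCayleyTree G k) (v : V) : Finset V :=
  (nbr_finite hG v).toFinset

lemma mem_nbrF {hG : IsCayleyTree G k} {v w : V} : w ∈ nbrF hG v ↔ G.Adj v w := by
  simp [nbrF, Set.Finite.mem_toFinset]

lemma card_nbrF (hG : IsCayleyTree G k) (v : V) : (nbrF hG v).card = k + 1 := by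
  rw [nbrF, ← Set.ncard_eq_toFinset_card _ (nbr_finite hG v)]
  exact hG.degree v

lemma walk_induce {C : Set V} : ∀ {x y : V} (p : G.Walk x y), (∀ z ∈ p.support, z ∈ C) →
    ∀ (hx : x ∈ C) (hy : y ∈ C), Nonempty ((G.induce C).Walk ⟨x, hx⟩ ⟨y, hy⟩)
  | x, _, .nil, _, hx, hy => ⟨.nil⟩
  | x, y, .cons (v := b) h q, hs, hx, hy => by
    have hb : b ∈ C := hs b (by simp)
    obtain ⟨q'⟩ := walk_induce q (fun z hz => hs z (by simp [hz])) hb hy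
    exact ⟨.cons (by simpa using h) q'⟩

lemma acyclic_induce (hA : G.IsAcyclic) (C : Set V) : (G.induce C).IsAcyclic := by
  rw [isAcyclic_iff_path_unique] at hA ⊢
  intro v w p q
  let f : G.induce C →g G := ⟨Subtype.val, fun {a b} h => by simpa using h⟩
  have hinj : Function.Injective f := Subtype.val_injective
  have h2 := hA ⟨Walk.map f p.1, Walk.map_isPath_of_injective hinj p.2⟩
    ⟨Walk.map f q.1, Walk.map_isPath_of_injective hinj q.2⟩
  have h3 : Walk.map f p.1 = Walk.map f q.1 := congrArg Subtype.val h2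
  exact Subtype.ext (Walk.map_injective_of_injective hinj _ _ h3)

lemma sum_indeg (hG : IsCayleyTree G k) {C : Set V} [Fintype C] (hne : C.Nonempty)
    (hconn : SetConnected G C) :
    ∑ x ∈ C.toFinset, ((nbrF hG x).filter (· ∈ C)).card = 2 * (C.toFinset.card - 1) := by
  classical
  set H := G.induce C with hH
  haveI : DecidableRel H.Adj := Classical.decRel _
  have htree : H.IsTree := by
    constructor
    · rw [connected_iff]
      refine ⟨?_, ?_⟩
      · intro a b
        obtain ⟨p, hp⟩ := hconn a a.2 b b.2
        obtain ⟨q⟩ := walk_induce p hp a.2 b.2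
        exact ⟨q⟩
      · obtain ⟨x, hx⟩ := hne
        exact ⟨⟨x, hx⟩⟩
    · exact acyclic_induce hG.acyclic C
  have hcount := htree.card_edgeFinset
  have hdeg : ∀ a : C, H.degree a = ((nbrF hG (a : V)).filter (· ∈ C)).card := by
    intro a
    rw [SimpleGraph.degree]
    apply Finset.card_bij (fun (b : C) _ => (b : V))
    · intro b hb
      rw [mem_neighborFinset] at hb
      simp only [Finset.mem_filter, mem_nbrF]
      exact ⟨by exact hb, b.2⟩
    · intro b1 _ b2 _ hbb
      exact Subtype.ext hbb
    · intro y hy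
      simp only [Finset.mem_filter, mem_nbrF] at hy
      exact ⟨⟨y, hy.2⟩, by rw [mem_neighborFinset]; exact hy.1, rfl⟩
  have hsum := H.sum_degrees_eq_twice_card_edges
  have hconv : ∑ x ∈ C.toFinset, ((nbrF hG x).filter (· ∈ C)).card
      = ∑ a : C, H.degree a := by
    rw [Finset.sum_subtype C.toFinset (fun x => Set.mem_toFinset)
      (fun x => ((nbrF hG x).filter (· ∈ C)).card)]
    exact Finset.sum_congr rfl fun a _ => (hdeg a).symm
  have hef : H.edgeFinset.card = Fintype.card H.edgeSet := Set.toFinset_card _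
  have hcard : C.toFinset.card = Fintype.card C := Set.toFinset_card C
  rw [hconv, hsum]
  omega

end StabilityAux
section StabilityAux2

open SimpleGraph

variable {V : Type*} {G : SimpleGraph V} {k : ℕ}

noncomputable def ballF (hG : IsCayleyTree G k) (v : V) : ℕ → Finset V
  | 0 => {v}
  | r + 1 => ballF hG v r ∪ (ballF hG v r).biUnion (fun u => nbrF hG u)

lemma card_ballF (hG : IsCayleyTree G k) (v : V) (r : ℕ) :
    (ballF hG v r).card ≤ (k + 2) ^ r := by
  induction r with
  | zero => simp [ballF]
  | succ r ih =>
    calc (ballF hG v (r+1)).card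
        ≤ (ballF hG v r).card + ((ballF hG v r).biUnion (fun u => nbrF hG u)).card := by
          rw [ballF]; exact Finset.card_union_le _ _
      _ ≤ (ballF hG v r).card + ∑ u ∈ ballF hG v r, (nbrF hG u).card :=
          Nat.add_le_add_left Finset.card_biUnion_le _
      _ = (ballF hG v r).card + (ballF hG v r).card * (k + 1) := by
          rw [Finset.sum_congr rfl (fun u _ => card_nbrF hG u), Finset.sum_const, smul_eq_mul]
      _ = (ballF hG v r).card * (k + 2) := by ring
      _ ≤ (k + 2) ^ r * (k + 2) := Nat.mul_le_mul_right _ ih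
      _ = (k + 2) ^ (r + 1) := by ring

lemma mem_ballF (hG : IsCayleyTree G k) (v : V) :
    ∀ (r : ℕ) {w : V} (p : G.Walk w v), p.length ≤ r → w ∈ ballF hG v r
  | 0, w, p, hp => by
    have : w = v := Walk.eq_of_length_eq_zero (Nat.le_zero.mp hp)
    subst this
    simp [ballF]
  | r + 1, w, p, hp => by
    cases p with
    | nil =>
      rw [ballF]
      exact Finset.mem_union_left _ (mem_ballF hG v r .nil (by simp))
    | @cons _ b _ h q =>
      have hq : q.length ≤ r := by
        simp only [Walk.length_cons] at hp; omega
      have hb := mem_ballF hG v r q hq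
      rw [ballF]
      exact Finset.mem_union_right _
        (Finset.mem_biUnion.mpr ⟨b, hb, mem_nbrF.mpr h.symm⟩)

lemma subsets_finite_card (s : Finset V) :
    {C : Set V | C ⊆ ↑s}.Finite ∧ {C : Set V | C ⊆ ↑s}.ncard ≤ 2 ^ s.card := by
  classical
  have heq : {C : Set V | C ⊆ ↑s} = ↑(s.powerset.image ((↑) : Finset V → Set V)) := by
    ext C
    simp only [Set.mem_setOf_eq, Finset.coe_image, Set.mem_image, Finset.mem_coe,
      Finset.mem_powerset]
    constructor
    · intro h
      have hCf : C.Finite := s.finite_toSet.subset h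
      refine ⟨hCf.toFinset, ?_, hCf.coe_toFinset⟩
      intro x hx
      rw [Set.Finite.mem_toFinset] at hx
      exact_mod_cast h hx
    · rintro ⟨t, ht, rfl⟩
      exact_mod_cast Finset.coe_subset.mpr ht
  rw [heq]
  refine ⟨Finset.finite_toSet _, ?_⟩
  rw [Set.ncard_coe_finset]
  calc (s.powerset.image ((↑) : Finset V → Set V)).card
      ≤ s.powerset.card := Finset.card_image_le
    _ = 2 ^ s.card := Finset.card_powerset s

lemma neg_excess (G : SimpleGraph V) (J : ℝ) (σ : V → ℤ) (C : Set V) :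
    excessEnergy G J (flipSpins (fun w => -σ w) C) (fun w => -σ w)
      = excessEnergy G J (flipSpins σ C) σ := by
  unfold excessEnergy
  congr 1
  refine finsum_mem_congr rfl ?_
  intro e _
  induction e using Sym2.ind with
  | _ x y =>
    rw [Sym2.lift_mk, Sym2.lift_mk]
    norm_cast
    simp only [flipSpins]
    split_ifs <;> ring

end StabilityAux2
section StabilityAux3

open SimpleGraph

variable {V : Type*} {G : SimpleGraph V} {k : ℕ}

lemma size_bound (hG : IsCayleyTree G k) {J : ℝ} (hJ : 0 < J) {dD : ℕ}
    (hsmall : (dD : ℝ) < ((k : ℝ) - 1) / 2) {D : Set (Sym2 V)} (hD : D ⊆ G.edgeSet)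
    (hBdd : BddAbove (Set.range fun v => incidentCount D v))
    (hsup : (⨆ v, incidentCount D v) = dD)
    {σ : V → ℤ} (hSat : SatisfiesD G D σ)
    {C : Set V} (hC : C.Finite) (hne : C.Nonempty) (hconn : SetConnected G C) :
    2 * J * C.ncard ≤ excessEnergy G J (flipSpins σ C) σ := by
  classical
  haveI := hC.fintype
  set n := C.toFinset.card with hn
  have hncard : C.ncard = n := Set.ncard_eq_toFinset_card' C
  have hn1 : 1 ≤ n := Finset.card_pos.mpr (Set.toFinset_nonempty.mpr hne)
  set outF : V → Finset V := fun x => (nbrF hG x).filter (· ∉ C) with houtF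
  set inF : V → Finset V := fun x => (nbrF hG x).filter (· ∈ C) with hinF
  set crossP : Finset (V × V) :=
    C.toFinset.biUnion (fun x => (outF x).image (fun y => (x, y))) with hcrossP
  set crossE : Finset (Sym2 V) := crossP.image (fun p => s(p.1, p.2)) with hcrossE
  have mem_crossE : ∀ e, e ∈ crossE ↔ ∃ x y, x ∈ C ∧ y ∉ C ∧ G.Adj x y ∧ e = s(x, y) := by
    intro e
    constructor
    · intro he
      obtain ⟨p, hp, rfl⟩ := Finset.mem_image.mp he
      obtain ⟨x, hx, hp2⟩ := Finset.mem_biUnion.mp hp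
      obtain ⟨y, hy, rfl⟩ := Finset.mem_image.mp hp2
      rw [houtF] at hy
      rw [Finset.mem_filter, mem_nbrF] at hy
      exact ⟨x, y, Set.mem_toFinset.mp hx, hy.2, hy.1, rfl⟩
    · rintro ⟨x, y, hx, hy, hadj, rfl⟩
      refine Finset.mem_image.mpr ⟨(x, y), Finset.mem_biUnion.mpr
        ⟨x, Set.mem_toFinset.mpr hx, Finset.mem_image.mpr ⟨y, ?_, rfl⟩⟩, rfl⟩
      rw [houtF]
      rw [Finset.mem_filter, mem_nbrF]
      exact ⟨hadj, hy⟩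
  -- Step A : evaluate the finsum on the crossing edges
  have hA : excessEnergy G J (flipSpins σ C) σ = J * ∑ e ∈ crossE,
      ((Sym2.lift ⟨fun x y => σ x * σ y - flipSpins σ C x * flipSpins σ C y,
        fun _ _ => by ring⟩ e : ℤ) : ℝ) := by
    unfold excessEnergy
    congr 1
    apply finsum_mem_eq_sum_of_subset
    · rintro e ⟨heE, hsupp⟩
      rw [Function.mem_support] at hsupp
      induction e using Sym2.ind with
      | _ x y =>
        rw [SimpleGraph.mem_edgeSet] at heE
        by_cases hx : x ∈ C <;> by_cases hy : y ∈ C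
        · exfalso
          apply hsupp
          rw [Sym2.lift_mk]
          simp only [flipSpins, if_pos hx, if_pos hy]
          push_cast
          ring
        · exact Finset.mem_coe.mpr ((mem_crossE _).mpr ⟨x, y, hx, hy, heE, rfl⟩)
        · exact Finset.mem_coe.mpr ((mem_crossE _).mpr ⟨y, x, hy, hx, heE.symm, Sym2.eq_swap.symm⟩)
        · exfalso
          apply hsupp
          rw [Sym2.lift_mk]
          simp only [flipSpins, if_neg hx, if_neg hy]
          push_cast
          ring
    · intro e he
      obtain ⟨x, y, _, _, hadj, rfl⟩ := (mem_crossE e).mp (Finset.mem_coe.mp he)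
      exact hadj
  -- Step B : value on each crossing edge
  have hB : ∀ e ∈ crossE,
      ((Sym2.lift ⟨fun x y => σ x * σ y - flipSpins σ C x * flipSpins σ C y,
        fun _ _ => by ring⟩ e : ℤ) : ℝ) = if e ∈ D then (-2 : ℝ) else 2 := by
    intro e he
    obtain ⟨x, y, hx, hy, hadj, rfl⟩ := (mem_crossE e).mp he
    have hsat := hSat x y hadj
    rw [Sym2.lift_mk]
    simp only [flipSpins, if_pos hx, if_neg hy]
    have h1 : σ x * σ y = (if s(x, y) ∈ D then (-1 : ℤ) else 1) := by
      split_ifs with h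
      exacts [hsat.1 h, hsat.2 h]
    have h2 : σ x * σ y - (-σ x) * σ y = 2 * (σ x * σ y) := by ring
    rw [h2, h1]
    split_ifs <;> norm_num
  set fc := (crossE.filter (· ∈ D)).card with hfc
  -- Step C : sum value
  have hC1 : (∑ e ∈ crossE,
      ((Sym2.lift ⟨fun x y => σ x * σ y - flipSpins σ C x * flipSpins σ C y,
        fun _ _ => by ring⟩ e : ℤ) : ℝ))
      = 2 * (crossE.card : ℝ) - 4 * (fc : ℝ) := by
    rw [Finset.sum_congr rfl hB, Finset.sum_ite, Finset.sum_const, Finset.sum_const,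
      nsmul_eq_mul, nsmul_eq_mul]
    have hsplit : (crossE.filter (· ∈ D)).card + (crossE.filter (fun e => ¬ e ∈ D)).card
        = crossE.card := Finset.card_filter_add_card_filter_not _
    have hc : ((crossE.filter (fun e => ¬ e ∈ D)).card : ℝ)
        = (crossE.card : ℝ) - (fc : ℝ) := by
      rw [hfc, ← hsplit]
      push_cast
      ring
    rw [hc]
    ring
  -- Step D : cardinalities
  have hcardP : crossP.card = ∑ x ∈ C.toFinset, (outF x).card := by
    rw [hcrossP, Finset.card_biUnion]
    · exact Finset.sum_congr rfl fun x _ =>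
        Finset.card_image_of_injective _ (fun a b h => by simpa using h)
    · intro x hx y hy hxy
      simp only [Finset.disjoint_left, Finset.mem_image]
      rintro p ⟨a, _, rfl⟩ ⟨b, _, hb⟩
      exact hxy (congrArg Prod.fst hb).symm
  have hmemP : ∀ p ∈ crossP, p.1 ∈ C ∧ p.2 ∉ C := by
    intro p hp
    obtain ⟨x, hx, hp2⟩ := Finset.mem_biUnion.mp hp
    obtain ⟨y, hy, rfl⟩ := Finset.mem_image.mp hp2
    rw [houtF] at hy
    rw [Finset.mem_filter] at hy
    exact ⟨Set.mem_toFinset.mp hx, hy.2⟩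
  have hcardE : crossE.card = crossP.card := by
    rw [hcrossE]
    apply Finset.card_image_of_injOn
    intro p hp q hq hpq
    obtain ⟨hp1, hp2⟩ := hmemP p hp
    obtain ⟨hq1, hq2⟩ := hmemP q hq
    rcases Sym2.eq_iff.mp hpq with ⟨h1, h2⟩ | ⟨h1, h2⟩
    · exact Prod.ext h1 h2
    · exact absurd (h1 ▸ hp1) hq2
  have houtcard : ∀ x ∈ C.toFinset, (outF x).card + (inF x).card = k + 1 := by
    intro x _
    rw [houtF, hinF]
    have h := Finset.card_filter_add_card_filter_not (s := nbrF hG x)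
      (p := (· ∈ C))
    rw [card_nbrF hG x] at h
    simp only [Finset.filter_congr_decidable] at h ⊢
    omega
  have hinsum : ∑ x ∈ C.toFinset, (inF x).card = 2 * (n - 1) := sum_indeg hG hne hconn
  have hccn : crossE.card + 2 * (n - 1) = n * (k + 1) := by
    rw [hcardE, hcardP, ← hinsum, ← Finset.sum_add_distrib,
      Finset.sum_congr rfl houtcard, Finset.sum_const, smul_eq_mul]
  -- Step E : frustrated crossing edges
  have hKfin : ∀ x : V, {e ∈ D | x ∈ e}.Finite := by
    intro x
    apply Set.Finite.subset ((nbr_finite hG x).image (fun y => s(x, y)))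
    rintro e ⟨heD, hxe⟩
    obtain ⟨y, rfl⟩ := Sym2.mem_iff_exists.mp hxe
    exact ⟨y, (G.mem_edgeSet).mp (hD heD), rfl⟩
  have hfb : fc ≤ ∑ x ∈ C.toFinset, incidentCount D x := by
    have hsub : crossE.filter (· ∈ D) ⊆ C.toFinset.biUnion (fun x => (hKfin x).toFinset) := by
      intro e he
      rw [Finset.mem_filter] at he
      obtain ⟨x, y, hx, hy, hadj, rfl⟩ := (mem_crossE _).mp he.1
      exact Finset.mem_biUnion.mpr ⟨x, Set.mem_toFinset.mpr hx,
        (Set.Finite.mem_toFinset _).mpr ⟨he.2, Sym2.mem_mk_left x y⟩⟩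
    calc fc ≤ (C.toFinset.biUnion (fun x => (hKfin x).toFinset)).card :=
          Finset.card_le_card hsub
      _ ≤ ∑ x ∈ C.toFinset, ((hKfin x).toFinset).card := Finset.card_biUnion_le
      _ = ∑ x ∈ C.toFinset, incidentCount D x := by
          refine Finset.sum_congr rfl fun x _ => ?_
          rw [incidentCount, Set.ncard_eq_toFinset_card _ (hKfin x)]
  have hfn : fc ≤ n * dD := by
    refine hfb.trans ?_
    calc ∑ x ∈ C.toFinset, incidentCount D x ≤ ∑ _x ∈ C.toFinset, dD :=
        Finset.sum_le_sum (fun x _ => hsup ▸ le_ciSup hBdd x)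
      _ = n * dD := by rw [Finset.sum_const, smul_eq_mul]
  -- Step F : arithmetic
  have hk2 : 2 * dD + 2 ≤ k := by
    have h1 : (2 * dD : ℝ) + 1 < (k : ℝ) := by linarith
    have h2 : 2 * dD + 1 < k := by exact_mod_cast h1
    omega
  rw [hA, hC1, hncard]
  have hccR : (crossE.card : ℝ) + 2 * ((n : ℝ) - 1) = (n : ℝ) * ((k : ℝ) + 1) := by
    have h' := hccn
    have h'' := congrArg (Nat.cast : ℕ → ℝ) h'
    push_cast [Nat.cast_sub hn1] at h''
    linarith
  have hfR : (fc : ℝ) ≤ (n : ℝ) * (dD : ℝ) := by exact_mod_cast hfn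
  have hkR : (2 * (dD : ℝ) + 2) ≤ (k : ℝ) := by exact_mod_cast hk2
  have hnR : (1 : ℝ) ≤ (n : ℝ) := by exact_mod_cast hn1
  have hkey : 0 ≤ 2 * (crossE.card : ℝ) - 4 * (fc : ℝ) - 2 * (n : ℝ) := by
    nlinarith [mul_nonneg (show (0:ℝ) ≤ (n:ℝ) by linarith)
      (show (0:ℝ) ≤ (k:ℝ) - 2 * (dD:ℝ) - 2 by linarith)]
  nlinarith [mul_nonneg hJ.le hkey]

end StabilityAux3

/-- Theorem 2: stability: If `d_D < (k-1)/2`, then `σ^{D+}` (and likewise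
`σ^{D-}`) is stable: for every `E > 0` there is `N` depending only on `E`, `k`, `J` and
`d_D` (not on `v` nor on `D`) such that for every vertex `v`, the number of finite
nonempty connected sets `C ∋ v` with `H(σ_C) - H(σ^{D±}) < E` is at most `N`. -/
theorem stability {V : Type*} (G : SimpleGraph V) (k : ℕ) (hk : 2 ≤ k)
    (hG : IsCayleyTree G k) (root : V) (J : ℝ) (hJ : 0 < J)
    (dD : ℕ) (hsmall : (dD : ℝ) < ((k : ℝ) - 1) / 2) :
    ∀ Elevel : ℝ, 0 < Elevel → ∃ N : ℕ,
      ∀ D : Set (Sym2 V), D ⊆ G.edgeSet →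
        BddAbove (Set.range fun v => incidentCount D v) →
        (⨆ v, incidentCount D v) = dD →
        ∀ σ : V → ℤ, IsSpin σ → σ root = 1 → SatisfiesD G D σ →
          ∀ v : V,
            ({C : Set V | C.Finite ∧ C.Nonempty ∧ SetConnected G C ∧ v ∈ C
                ∧ excessEnergy G J (flipSpins σ C) σ < Elevel}.Finite
              ∧ {C : Set V | C.Finite ∧ C.Nonempty ∧ SetConnected G C ∧ v ∈ C
                ∧ excessEnergy G J (flipSpins σ C) σ < Elevel}.ncard ≤ N)
            ∧ ({C : Set V | C.Finite ∧ C.Nonempty ∧ SetConnected G C ∧ v ∈ C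
                ∧ excessEnergy G J (flipSpins (fun w => -σ w) C) (fun w => -σ w)
                    < Elevel}.Finite
              ∧ {C : Set V | C.Finite ∧ C.Nonempty ∧ SetConnected G C ∧ v ∈ C
                ∧ excessEnergy G J (flipSpins (fun w => -σ w) C) (fun w => -σ w)
                    < Elevel}.ncard ≤ N) := by
  intro Elevel hE
  set M := ⌈Elevel / (2 * J)⌉₊ + 1 with hM
  refine ⟨2 ^ ((k + 2) ^ M), ?_⟩
  intro D hD hBdd hsup σ hσ hroot hSat v
  have main : ∀ τ : V → ℤ, SatisfiesD G D τ →
      ({C : Set V | C.Finite ∧ C.Nonempty ∧ SetConnected G C ∧ v ∈ C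
          ∧ excessEnergy G J (flipSpins τ C) τ < Elevel}.Finite
        ∧ {C : Set V | C.Finite ∧ C.Nonempty ∧ SetConnected G C ∧ v ∈ C
          ∧ excessEnergy G J (flipSpins τ C) τ < Elevel}.ncard ≤ 2 ^ ((k + 2) ^ M)) := by
    intro τ hτ
    have hsub : {C : Set V | C.Finite ∧ C.Nonempty ∧ SetConnected G C ∧ v ∈ C
          ∧ excessEnergy G J (flipSpins τ C) τ < Elevel}
        ⊆ {C : Set V | C ⊆ ↑(ballF hG v M)} := by
      rintro C ⟨hCf, hCne, hCconn, hvC, hCE⟩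
      have hsize := size_bound hG hJ hsmall hD hBdd hsup hτ hCf hCne hCconn
      have hnM : C.ncard ≤ M := by
        have h1 : 2 * J * (C.ncard : ℝ) < Elevel := lt_of_le_of_lt hsize hCE
        have h2 : (C.ncard : ℝ) < Elevel / (2 * J) := by
          rw [lt_div_iff₀ (by linarith : (0:ℝ) < 2 * J)]
          linarith
        have h3 : (C.ncard : ℝ) ≤ (⌈Elevel / (2 * J)⌉₊ : ℝ) :=
          h2.le.trans (Nat.le_ceil _)
        have h4 : C.ncard ≤ ⌈Elevel / (2 * J)⌉₊ := by exact_mod_cast h3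
        omega
      intro w hw
      obtain ⟨p, hp⟩ := hCconn w hw v hvC
      have hlen : p.bypass.length ≤ M := by
        have hnodup := p.bypass_isPath.support_nodup
        haveI := hCf.fintype
        have hcard : p.bypass.support.toFinset.card ≤ C.toFinset.card := by
          apply Finset.card_le_card
          intro z hz
          rw [List.mem_toFinset] at hz
          exact Set.mem_toFinset.mpr (hp z (p.support_bypass_subset hz))
        rw [List.toFinset_card_of_nodup hnodup, SimpleGraph.Walk.length_support] at hcard
        have h5 : C.ncard = C.toFinset.card := Set.ncard_eq_toFinset_card' C
        omega
      exact Finset.mem_coe.mpr (mem_ballF hG v M p.bypass hlen)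
    have hpow := subsets_finite_card (ballF hG v M)
    refine ⟨hpow.1.subset hsub, ?_⟩
    refine (Set.ncard_le_ncard hsub hpow.1).trans (hpow.2.trans ?_)
    exact Nat.pow_le_pow_right (by norm_num) (card_ballF hG v M)
  have hneg' : SatisfiesD G D (fun w => -σ w) := by
    intro x y hxy
    have h := hSat x y hxy
    constructor <;> intro hmem
    · show (-σ x) * (-σ y) = -1
      rw [neg_mul_neg]
      exact h.1 hmem
    · show (-σ x) * (-σ y) = 1
      rw [neg_mul_neg]
      exact h.2 hmem
  exact ⟨main σ hSat, main (fun w => -σ w) hneg'⟩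
end

section
/- The Cayley tree 𝒯^k admits a path covering: there exists a set D̂ ⊆ E of edges such that every vertex v ∈ V belongs to exactly two edges of D̂ (i.e., 𝒯^k has a spanning 2-regular subgraph, whose components are doubly infinite paths passing through every vertex). -/
open Classical

/-!
Root the tree at a vertex `r` and let every vertex `v` pick two children `a v ≠ b v`, which
exists since every vertex has at least two neighbours besides its parent. Going down from the
root, a vertex that already uses the edge to its parent adds only the edge to `a v`, any other
vertex adds the edges to both `a v` and `b v`. Then every vertex lies in exactly two chosen
edges; this top-down choice is a recursion on the distance to `r`.
-/

open SimpleGraph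

section ParentMap

variable {V : Type*} {r : V} {par : V → V} {depth : V → ℕ}

def children (par : V → V) (r v : V) : Set V := {c | c ≠ r ∧ par c = v}

lemma depth_lt_of_mem_children (hdepth : ∀ v ≠ r, depth (par v) < depth v) {c v : V}
    (hc : c ∈ children par r v) : depth v < depth c :=
  hc.2 ▸ hdepth c hc.1

def UsesParentEdge (hdepth : ∀ v ≠ r, depth (par v) < depth v) (a b : V → V) (v : V) : Prop :=
  if _ : v = r then False
  else v = a (par v) ∨ (v = b (par v) ∧ ¬ UsesParentEdge hdepth a b (par v))
termination_by depth v
decreasing_by exact hdepth v ‹_›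

variable (hdepth : ∀ v ≠ r, depth (par v) < depth v) (a b : V → V)

lemma usesParentEdge_iff {v : V} :
    UsesParentEdge hdepth a b v ↔
      v ≠ r ∧ (v = a (par v) ∨ (v = b (par v) ∧ ¬ UsesParentEdge hdepth a b (par v))) := by
  rw [UsesParentEdge]
  split_ifs with hv <;> simp [hv]

def usedParentEdges : Set (Sym2 V) :=
  (fun v => s(v, par v)) '' {v | UsesParentEdge hdepth a b v}

variable {a b} (ha : ∀ v, a v ∈ children par r v) (hb : ∀ v, b v ∈ children par r v)
include ha hb

lemma mem_usedParentEdges_and_mem_iff {v : V} {e : Sym2 V} :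
    e ∈ usedParentEdges hdepth a b ∧ v ∈ e ↔
      (UsesParentEdge hdepth a b v ∧ e = s(v, par v)) ∨ e = s(a v, v) ∨
        (¬ UsesParentEdge hdepth a b v ∧ e = s(b v, v)) := by
  constructor
  · rintro ⟨⟨w, hw, rfl⟩, hvw⟩
    rcases Sym2.mem_iff.mp hvw with rfl | rfl
    · exact Or.inl ⟨hw, rfl⟩
    · rcases ((usesParentEdge_iff hdepth a b).mp hw).2 with h | ⟨h, hpar⟩
      · exact Or.inr (Or.inl (h ▸ rfl))
      · exact Or.inr (Or.inr ⟨hpar, h ▸ rfl⟩)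
  · have hused : ∀ c ∈ children par r v, (c = a v ∨ (c = b v ∧ ¬ UsesParentEdge hdepth a b v)) →
        s(c, v) ∈ usedParentEdges hdepth a b ∧ v ∈ s(c, v) := fun c ⟨hcr, hcv⟩ h =>
      ⟨⟨c, (usesParentEdge_iff hdepth a b).mpr ⟨hcr, hcv ▸ h⟩, hcv ▸ rfl⟩, Sym2.mem_mk_right c v⟩
    rintro (⟨hv, rfl⟩ | rfl | ⟨hv, rfl⟩)
    · exact ⟨⟨v, hv, rfl⟩, Sym2.mem_mk_left v _⟩
    · exact hused _ (ha v) (Or.inl rfl)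
    · exact hused _ (hb v) (Or.inr ⟨rfl, hv⟩)

lemma incidentCount_usedParentEdges (hab : ∀ v, a v ≠ b v) (v : V) :
    incidentCount (usedParentEdges hdepth a b) v = 2 := by
  have hav : a v ≠ v := fun h => (depth_lt_of_mem_children hdepth (ha v)).ne' (by rw [h])
  by_cases hv : UsesParentEdge hdepth a b v
  · have hpar : par v ≠ a v := fun h =>
      (hdepth v ((usesParentEdge_iff hdepth a b).mp hv).1).not_gt
        (h ▸ depth_lt_of_mem_children hdepth (ha v))
    have hset : {e ∈ usedParentEdges hdepth a b | v ∈ e} = {s(v, par v), s(a v, v)} := by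
      ext e
      simpa [hv] using mem_usedParentEdges_and_mem_iff hdepth ha hb (v := v) (e := e)
    rw [incidentCount, hset, Set.ncard_pair]
    simp [hav.symm, hpar]
  · have hset : {e ∈ usedParentEdges hdepth a b | v ∈ e} = {s(a v, v), s(b v, v)} := by
      ext e
      simpa [hv] using mem_usedParentEdges_and_mem_iff hdepth ha hb (v := v) (e := e)
    rw [incidentCount, hset, Set.ncard_pair]
    simp [hab v, hav]

end ParentMap

namespace SimpleGraph

variable {V : Type*} {G : SimpleGraph V} {r u v : V}

lemma Connected.exists_adj_dist_add_one_eq (hc : G.Connected) (hv : v ≠ r) :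
    ∃ u, G.Adj v u ∧ G.dist r u + 1 = G.dist r v := by
  obtain ⟨p, hp⟩ := hc.exists_walk_length_eq_dist v r
  cases p with
  | nil => exact absurd rfl hv
  | @cons _ u _ hvu q =>
    refine ⟨u, hvu, le_antisymm ?_ ?_⟩
    · calc G.dist r u + 1 ≤ q.length + 1 := by
            rw [dist_comm]; exact Nat.succ_le_succ (dist_le q)
        _ = G.dist r v := by rw [← Walk.length_cons hvu q, hp, dist_comm]
    · calc G.dist r v ≤ G.dist r u + G.dist u v := hc.dist_triangle
        _ = G.dist r u + 1 := by rw [dist_eq_one_iff_adj.mpr hvu.symm]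

/-- An arbitrary vertex unless `v ≠ r` and `v` is reachable from `r`. -/
noncomputable def stepToward (G : SimpleGraph V) (r v : V) : V :=
  @Classical.epsilon V ⟨v⟩ fun u => G.Adj v u ∧ G.dist r u + 1 = G.dist r v

lemma Connected.stepToward_spec (hc : G.Connected) (hv : v ≠ r) :
    G.Adj v (G.stepToward r v) ∧ G.dist r (G.stepToward r v) + 1 = G.dist r v :=
  @Classical.epsilon_spec V _ (hc.exists_adj_dist_add_one_eq hv)

lemma IsTree.eq_of_adj_of_dist_add_one_eq (hT : G.IsTree) {u' : V} (hu : G.Adj u v)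
    (hu' : G.Adj u' v) (hdu : G.dist r u + 1 = G.dist r v) (hdu' : G.dist r u' + 1 = G.dist r v) :
    u = u' := by
  obtain ⟨p, hp⟩ := hT.connected.exists_walk_length_eq_dist r u
  obtain ⟨p', hp'⟩ := hT.connected.exists_walk_length_eq_dist r u'
  have hpath : (p.concat hu).IsPath :=
    Walk.isPath_of_length_eq_dist _ (by rw [Walk.length_concat, hp, hdu])
  have hpath' : (p'.concat hu').IsPath :=
    Walk.isPath_of_length_eq_dist _ (by rw [Walk.length_concat, hp', hdu'])
  have := (hT.isAcyclic.subsingleton_path r v).elim ⟨_, hpath⟩ ⟨_, hpath'⟩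
  exact (Walk.concat_inj (congrArg Subtype.val this)).1

lemma IsTree.stepToward_eq_of_adj_of_ne (hT : G.IsTree) {c : V} (hadj : G.Adj v c)
    (hc : c ≠ G.stepToward r v) : c ≠ r ∧ G.stepToward r c = v := by
  rcases hT.dist_eq_dist_add_one_of_adj r hadj with h | h
  · have hv : v ≠ r := by rintro rfl; simp at h
    have hstep := hT.connected.stepToward_spec hv
    exact absurd (hT.eq_of_adj_of_dist_add_one_eq hadj.symm hstep.1.symm h.symm hstep.2) hc
  · have hcr : c ≠ r := by rintro rfl; simp at h
    have hstep := hT.connected.stepToward_spec hcr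
    exact ⟨hcr, hT.eq_of_adj_of_dist_add_one_eq hstep.1.symm hadj hstep.2 h.symm⟩

theorem IsTree.exists_incidentCount_eq_two (hT : G.IsTree)
    (hdeg : ∀ v, 3 ≤ (G.neighborSet v).encard) :
    ∃ D ⊆ G.edgeSet, ∀ v, incidentCount D v = 2 := by
  obtain ⟨r⟩ := hT.connected.nonempty
  have hdepth : ∀ v ≠ r, G.dist r (G.stepToward r v) < G.dist r v := fun v hv => by
    have := (hT.connected.stepToward_spec hv).2; omega
  have hchildren : ∀ v, 1 < (children (G.stepToward r) r v).encard := fun v =>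
    calc (1 : ℕ∞) < (G.neighborSet v).encard - 1 :=
        lt_tsub_iff_right.mpr (lt_of_lt_of_le (by norm_num) (hdeg v))
      _ ≤ (G.neighborSet v \ {G.stepToward r v}).encard :=
          Set.encard_tsub_one_le_encard_sdiff_singleton _ _
      _ ≤ _ := Set.encard_le_encard fun c ⟨hadj, hc⟩ => hT.stepToward_eq_of_adj_of_ne hadj hc
  choose a b ha hb hab using fun v => Set.one_lt_encard_iff.mp (hchildren v)
  refine ⟨usedParentEdges hdepth a b, ?_, incidentCount_usedParentEdges hdepth ha hb hab⟩
  rintro _ ⟨v, hv, rfl⟩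
  exact (hT.connected.stepToward_spec ((usesParentEdge_iff hdepth a b).mp hv).1).1

end SimpleGraph

/-- The Cayley tree admits a path covering: a set of edges `D̂` such that
every vertex belongs to exactly two edges of `D̂` (a spanning 2-regular subgraph). -/
theorem path_covering_exists {V : Type*} (G : SimpleGraph V) (k : ℕ) (hk : 2 ≤ k)
    (hG : IsCayleyTree G k) :
    ∃ Dhat : Set (Sym2 V), Dhat ⊆ G.edgeSet ∧ ∀ v : V, incidentCount Dhat v = 2 := by
  refine IsTree.exists_incidentCount_eq_two ⟨hG.connected, hG.acyclic⟩ fun v => ?_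
  have hfin : (G.neighborSet v).Finite :=
    Set.finite_of_ncard_ne_zero (by rw [hG.degree]; omega)
  rw [← hfin.cast_ncard_eq, hG.degree]
  exact_mod_cast (by omega : 3 ≤ k + 1)
end
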